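/- arXiv:math-ph/9909023 — 4 statements merged into one kernel-verified Lean document; each statement's English description precedes it below -/
import Mathlib

section
/- Fix an integer m ≥ 2. For every positive integer d and every partition λ of d, the rational number f^{(m)}(λ) := −(1/m²) · (coefficient of y^{m+1} in ∏_{i=1}^{m}(1+(d−i+1/2)y) · ∏_{i=1}^{d}(1−(m+λ̃_i)y)·(1−λ̃_i y)^{−1} ∈ ℚ[[y]]) can be written as φ_m(p_1(λ), p_2(λ), …, p_m(λ)) for a single polynomial φ_m ∈ ℚ[Y_1,…,Y_m] that is independent of d and λ. That is, there exists φ_m ∈ ℚ[Y_1,…,Y_m] such that f^{(m)}(λ) = φ_m(p_1(λ),…,p_m(λ)) for all d ≥ 1 and all partitions λ of d. -/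
open Finset

/-- The shifted parts `λ̃ᵢ = λᵢ - i + 1/2` of a partition (with `i` one-based;
here the index `i : Fin d` is zero-based, so the `i`-th part is `λ_{i+1}`). -/
noncomputable def shiftedPart (d : ℕ) (lam : Fin d → ℕ) (i : Fin d) : ℚ :=
  (lam i : ℚ) - ((i : ℕ) + 1) + 1 / 2

/-- The shifted power sum `p_k(λ) = Σᵢ (λ̃ᵢ^k − (−i+1/2)^k)`. -/
noncomputable def shiftedPowerSum (d : ℕ) (lam : Fin d → ℕ) (k : ℕ) : ℚ :=
  ∑ i : Fin d, (shiftedPart d lam i ^ k - (-(((i : ℕ) : ℚ) + 1) + 1 / 2) ^ k)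

/-- `f^{(m)}(λ) = −(1/m²) · [y^{m+1}] ∏_{i=1}^{m}(1+(d−i+1/2)y) ·
∏_{i=1}^{d}(1−(m+λ̃ᵢ)y)·(1−λ̃ᵢ y)⁻¹` in `ℚ[[y]]`. -/
noncomputable def charValue (m d : ℕ) (lam : Fin d → ℕ) : ℚ :=
  -(1 / (m : ℚ) ^ 2) * (PowerSeries.coeff (R := ℚ) (m + 1))
    ((∏ t : Fin m, (1 + PowerSeries.C (R := ℚ) ((d : ℚ) - ((t : ℕ) + 1) + 1 / 2) * PowerSeries.X)) *
      ∏ i : Fin d,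
        ((1 - PowerSeries.C (R := ℚ) ((m : ℚ) + shiftedPart d lam i) * PowerSeries.X) *
          (1 - PowerSeries.C (R := ℚ) (shiftedPart d lam i) * PowerSeries.X)⁻¹))

/-!
Let `H` be the power series whose `y^{m+1}`-coefficient defines `f^{(m)}(λ)`.
Its logarithmic derivative `H'/H` is a sum of geometric series, so its `n`-th coefficient is a
polynomial in `d` and the power sums `Σᵢ λ̃ᵢ^l` with `l ≤ n` (the top powers `λ̃ᵢ^{n+1}` cancel).
Comparing coefficients in `H' = H · (H'/H)` gives `(n+1) h_{n+1} = Σ_{i+j=n} h_i ℓ_j`, so every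
`h_n` with `n ≤ m + 1` is a polynomial in `d` and the power sums of order `≤ m`. Finally
`Σᵢ λ̃ᵢ^l = p_l(λ) + Σ_{i<d} (-i-1/2)^l` is `p_l(λ)` plus a polynomial in `d` (Faulhaber), and
`d = p_1(λ)` because `λ` has size `d`. Polynomiality is expressed as membership in the
`ℚ`-subalgebra, generated by `p_1, …, p_m`, of functions of `(d, λ)`.
-/

open PowerSeries

section LogDerivative

variable {K : Type*} [Field K]

noncomputable def logDerivative (f : K⟦X⟧) : K⟦X⟧ := d⁄dX K f * f⁻¹

theorem derivative_eq_mul_logDerivative {f : K⟦X⟧} (hf : constantCoeff f ≠ 0) :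
    d⁄dX K f = f * logDerivative f := by
  rw [logDerivative, mul_left_comm, PowerSeries.mul_inv_cancel f hf, mul_one]

theorem logDerivative_mul {f g : K⟦X⟧} (hf : constantCoeff f ≠ 0)
    (hg : constantCoeff g ≠ 0) :
    logDerivative (f * g) = logDerivative f + logDerivative g := by
  simp only [logDerivative, Derivation.leibniz, smul_eq_mul, PowerSeries.mul_inv_rev]
  linear_combination (d⁄dX K g * g⁻¹) * PowerSeries.mul_inv_cancel f hf +
    (d⁄dX K f * f⁻¹) * PowerSeries.mul_inv_cancel g hg

theorem logDerivative_inv {f : K⟦X⟧} (hf : constantCoeff f ≠ 0) :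
    logDerivative f⁻¹ = -logDerivative f := by
  have hff : f⁻¹⁻¹ = f :=
    (PowerSeries.inv_eq_iff_mul_eq_one (by simpa using hf)).mpr (PowerSeries.mul_inv_cancel f hf)
  simp only [logDerivative, derivative_inv', hff]
  linear_combination (-(d⁄dX K f * f⁻¹)) * PowerSeries.mul_inv_cancel f hf

theorem logDerivative_prod {ι : Type*} (s : Finset ι) {f : ι → K⟦X⟧}
    (hf : ∀ i ∈ s, constantCoeff (f i) ≠ 0) :
    logDerivative (∏ i ∈ s, f i) = ∑ i ∈ s, logDerivative (f i) := by
  classical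
  induction s using Finset.induction_on with
  | empty => simp [logDerivative]
  | insert i s hi ih =>
    have hprod : constantCoeff (∏ j ∈ s, f j) ≠ 0 := by
      rw [map_prod]
      exact prod_ne_zero_iff.mpr fun j hj => hf j (mem_insert_of_mem hj)
    rw [prod_insert hi, sum_insert hi, logDerivative_mul (hf i (mem_insert_self i s)) hprod,
      ih fun j hj => hf j (mem_insert_of_mem hj)]

theorem inv_one_sub_C_mul_X (b : K) : (1 - C b * X)⁻¹ = mk (b ^ ·) := by
  rw [PowerSeries.inv_eq_iff_mul_eq_one (by simp)]
  ext (_ | n) <;> simp [mul_sub, ← mul_assoc, mul_comm _ (C b), pow_succ, mul_comm b]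

theorem coeff_logDerivative_one_sub_C_mul_X (b : K) (n : ℕ) :
    coeff n (logDerivative (1 - C b * X)) = -b ^ (n + 1) := by
  simp [logDerivative, inv_one_sub_C_mul_X, pow_succ']

theorem coeff_succ_mul_eq_sum_logDerivative {f : K⟦X⟧} (hf : constantCoeff f ≠ 0) (n : ℕ) :
    coeff (n + 1) f * (n + 1) =
      ∑ p ∈ antidiagonal n, coeff p.1 f * coeff p.2 (logDerivative f) := by
  rw [← coeff_derivative, derivative_eq_mul_logDerivative hf, coeff_mul]

theorem coeff_mem_of_coeff_logDerivative_mem [CharZero K] {ι : Type*} (S : Subalgebra K (ι → K))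
    {H : ι → K⟦X⟧} (hH : ∀ i, constantCoeff (H i) = 1) (n : ℕ)
    (hL : ∀ j < n, (fun i => coeff j (logDerivative (H i))) ∈ S) :
    (fun i => coeff n (H i)) ∈ S := by
  induction n using Nat.strong_induction_on with
  | _ n ih =>
    rcases n with _ | n
    · convert S.one_mem using 1
      funext i
      exact (coeff_zero_eq_constantCoeff_apply _).trans (hH i)
    · have hrec : (fun i => coeff (n + 1) (H i)) = ((n : K) + 1)⁻¹ • ∑ p ∈ antidiagonal n,
          (fun i => coeff p.1 (H i)) * fun i => coeff p.2 (logDerivative (H i)) := by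
        funext i
        have hcoeff := coeff_succ_mul_eq_sum_logDerivative (by simp [hH]) n (f := H i)
        simp only [Pi.smul_apply, Finset.sum_apply, Pi.mul_apply, ← hcoeff, smul_eq_mul]
        field_simp
      rw [hrec]
      refine S.smul_mem (S.sum_mem fun p hp => S.mul_mem ?_ ?_) _ <;>
        have := mem_antidiagonal.mp hp
      · exact ih p.1 (by omega) fun j hj => hL j (by omega)
      · exact hL p.2 (by omega)

end LogDerivative

theorem Polynomial.exists_eval_eq_sum_range_eval (g : Polynomial ℚ) :
    ∃ q : Polynomial ℚ, ∀ n : ℕ, q.eval (n : ℚ) = ∑ i ∈ range n, g.eval (i : ℚ) := by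
  induction g using Polynomial.induction_on' with
  | add g h hg hh =>
    obtain ⟨q, hq⟩ := hg
    obtain ⟨r, hr⟩ := hh
    exact ⟨q + r, fun n => by simp [hq, hr, sum_add_distrib]⟩
  | monomial j a =>
    refine ⟨C (a / (j + 1)) * (bernoulli (j + 1) - C (_root_.bernoulli (j + 1))), fun n => ?_⟩
    have := sum_range_pow_eq_bernoulli_sub n j
    simp only [eval_mul, eval_C, eval_sub, eval_monomial, ← mul_sum,
      Nat.succ_eq_add_one] at this ⊢
    rw [← this]
    field_simp

theorem add_pow_succ_sub_pow {R : Type*} [CommRing R] (a b : R) (n : ℕ) :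
    (a + b) ^ (n + 1) - a ^ (n + 1) =
      ∑ l ∈ range (n + 1), a ^ l * b ^ (n + 1 - l) * (n + 1).choose l := by
  rw [add_pow, sum_range_succ]
  simp

abbrev WeakComposition : Type := {x : (d : ℕ) × (Fin d → ℕ) // ∑ i, x.2 i = x.1}

noncomputable def powerSumAlgebra (m : ℕ) : Subalgebra ℚ (WeakComposition → ℚ) :=
  Algebra.adjoin ℚ (Set.range fun k : Fin m => fun x : WeakComposition =>
    shiftedPowerSum x.1.1 x.1.2 (k + 1))

section PowerSumAlgebra

variable {m : ℕ}

theorem shiftedPowerSum_mem_powerSumAlgebra {k : ℕ} (hk : k ≤ m) :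
    (fun x : WeakComposition => shiftedPowerSum x.1.1 x.1.2 k) ∈ powerSumAlgebra m := by
  rcases k with _ | k
  · simp only [shiftedPowerSum, pow_zero, sub_self, sum_const_zero]
    exact zero_mem _
  · exact Algebra.subset_adjoin ⟨⟨k, by omega⟩, rfl⟩

theorem shiftedPowerSum_one (d : ℕ) (lam : Fin d → ℕ) :
    shiftedPowerSum d lam 1 = ∑ i, (lam i : ℚ) := by
  simp only [shiftedPowerSum, shiftedPart, pow_one]
  congr! 1 with i
  ring

theorem eval_size_mem_powerSumAlgebra (hm : 0 < m) (q : Polynomial ℚ) :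
    (fun x : WeakComposition => q.eval (x.1.1 : ℚ)) ∈ powerSumAlgebra m := by
  have hsize : (fun x : WeakComposition => (x.1.1 : ℚ)) ∈ powerSumAlgebra m := by
    convert shiftedPowerSum_mem_powerSumAlgebra hm using 2 with x
    rw [shiftedPowerSum_one, ← Nat.cast_sum, x.2]
  convert Algebra.adjoin_le (Set.singleton_subset_iff.mpr hsize)
    (Polynomial.aeval_mem_adjoin_singleton ℚ (fun x : WeakComposition => (x.1.1 : ℚ)) (p := q))
    using 1
  funext x
  rw [Polynomial.aeval_pi_apply₂, Polynomial.coe_aeval_eq_eval]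

theorem sum_shiftedPart_pow_mem_powerSumAlgebra (hm : 0 < m) {k : ℕ} (hk : k ≤ m) :
    (fun x : WeakComposition => ∑ i, shiftedPart x.1.1 x.1.2 i ^ k) ∈ powerSumAlgebra m := by
  obtain ⟨q, hq⟩ := Polynomial.exists_eval_eq_sum_range_eval
    ((-(Polynomial.X + 1) + Polynomial.C (1 / 2)) ^ k)
  have hsplit : (fun x : WeakComposition => ∑ i, shiftedPart x.1.1 x.1.2 i ^ k) =
      (fun x => shiftedPowerSum x.1.1 x.1.2 k) + fun x => q.eval (x.1.1 : ℚ) := by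
    funext x
    rw [Pi.add_apply, hq, shiftedPowerSum, sum_sub_distrib, ← Fin.sum_univ_eq_sum_range]
    simp
  rw [hsplit]
  exact add_mem (shiftedPowerSum_mem_powerSumAlgebra hk) (eval_size_mem_powerSumAlgebra hm q)

end PowerSumAlgebra

noncomputable def charSeries (m d : ℕ) (a : Fin d → ℚ) : ℚ⟦X⟧ :=
  (∏ t : Fin m, (1 + C ((d : ℚ) - ((t : ℕ) + 1) + 1 / 2) * X)) *
    ∏ i : Fin d, ((1 - C ((m : ℚ) + a i) * X) * (1 - C (a i) * X)⁻¹)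

theorem charValue_eq_coeff_charSeries (m d : ℕ) (lam : Fin d → ℕ) :
    charValue m d lam =
      -(1 / (m : ℚ) ^ 2) * coeff (m + 1) (charSeries m d (shiftedPart d lam)) :=
  rfl

theorem constantCoeff_charSeries (m d : ℕ) (a : Fin d → ℚ) :
    constantCoeff (charSeries m d a) = 1 := by
  simp [charSeries]

theorem coeff_logDerivative_charSeries (m d : ℕ) (a : Fin d → ℚ) (n : ℕ) :
    coeff n (logDerivative (charSeries m d a)) =
      -∑ t : Fin m, (-((d : ℚ) - ((t : ℕ) + 1) + 1 / 2)) ^ (n + 1) -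
        ∑ i, ∑ l ∈ range (n + 1), a i ^ l * (m : ℚ) ^ (n + 1 - l) * (n + 1).choose l := by
  have hplus (c : ℚ) : (1 + C c * X : ℚ⟦X⟧) = 1 - C (-c) * X := by simp
  simp only [charSeries, hplus]
  rw [logDerivative_mul (by simp) (by simp), logDerivative_prod _ (by simp),
    logDerivative_prod _ (by simp)]
  have hfactor (i : Fin d) :
      coeff n (logDerivative ((1 - C ((m : ℚ) + a i) * X) * (1 - C (a i) * X)⁻¹)) =
        -∑ l ∈ range (n + 1), a i ^ l * (m : ℚ) ^ (n + 1 - l) * (n + 1).choose l := by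
    rw [logDerivative_mul (by simp) (by simp), logDerivative_inv (by simp), map_add, map_neg,
      coeff_logDerivative_one_sub_C_mul_X, coeff_logDerivative_one_sub_C_mul_X,
      ← add_pow_succ_sub_pow, add_comm (m : ℚ)]
    ring
  rw [map_add, map_sum, map_sum]
  simp only [hfactor, coeff_logDerivative_one_sub_C_mul_X, sum_neg_distrib]
  ring

theorem coeff_logDerivative_charSeries_mem {m n : ℕ} (hm : 0 < m) (hn : n ≤ m) :
    (fun x : WeakComposition =>
      coeff n (logDerivative (charSeries m x.1.1 (shiftedPart x.1.1 x.1.2)))) ∈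
        powerSumAlgebra m := by
  let g : Polynomial ℚ := -∑ t : Fin m,
    (-(Polynomial.X - Polynomial.C ((t : ℚ) + 1) + Polynomial.C (1 / 2))) ^ (n + 1)
  have hexpand : (fun x : WeakComposition =>
      coeff n (logDerivative (charSeries m x.1.1 (shiftedPart x.1.1 x.1.2)))) =
      (fun x => g.eval (x.1.1 : ℚ)) - ∑ l ∈ range (n + 1),
        ((m : ℚ) ^ (n + 1 - l) * (n + 1).choose l) •
          fun x : WeakComposition => ∑ i, shiftedPart x.1.1 x.1.2 i ^ l := by
    funext x
    simp only [coeff_logDerivative_charSeries, g, Pi.sub_apply, Finset.sum_apply, Pi.smul_apply,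
      smul_eq_mul, mul_sum, Polynomial.eval_neg, Polynomial.eval_finsetSum, Polynomial.eval_pow,
      Polynomial.eval_add, Polynomial.eval_sub, Polynomial.eval_X, Polynomial.eval_C]
    rw [sum_comm]
    congr! 3
    ring
  rw [hexpand]
  refine sub_mem (eval_size_mem_powerSumAlgebra hm g)
    (sum_mem fun l hl => Subalgebra.smul_mem _ ?_ _)
  exact sum_shiftedPart_pow_mem_powerSumAlgebra hm (by have := mem_range.mp hl; omega)

/-- There is one polynomial `φ_m ∈ ℚ[Y₁,…,Y_m]`, independent of `d` and `λ`, with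
`f^{(m)}(λ) = φ_m(p₁(λ),…,p_m(λ))` for all `d ≥ 1` and all partitions `λ` of `d`. -/
theorem statement0 (m : ℕ) (hm : 2 ≤ m) :
    ∃ φ : MvPolynomial (Fin m) ℚ,
      ∀ d : ℕ, 1 ≤ d → ∀ lam : Fin d → ℕ,
        (∀ i j : Fin d, i ≤ j → lam j ≤ lam i) → (∑ i, lam i) = d →
          charValue m d lam =
            MvPolynomial.eval (fun k : Fin m => shiftedPowerSum d lam ((k : ℕ) + 1)) φ := by
  have hmem : (fun x : WeakComposition => charValue m x.1.1 x.1.2) ∈ powerSumAlgebra m := by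
    simp only [charValue_eq_coeff_charSeries]
    refine Subalgebra.smul_mem _ (coeff_mem_of_coeff_logDerivative_mem _
      (fun x => constantCoeff_charSeries _ _ _) (m + 1)
      fun j hj => coeff_logDerivative_charSeries_mem (by omega) (by omega)) (-(1 / (m : ℚ) ^ 2))
  rw [powerSumAlgebra, Algebra.adjoin_range_eq_range_aeval] at hmem
  obtain ⟨φ, hφ⟩ := hmem
  refine ⟨φ, fun d _ lam _ hsum => ?_⟩
  rw [← MvPolynomial.coe_aeval_eq_eval, ← congrFun hφ ⟨⟨d, lam⟩, hsum⟩]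
  exact MvPolynomial.comp_aeval_apply _ (Pi.evalAlgHom ℚ (fun _ => ℚ) _) φ
end

section
/- Let d ≥ m ≥ 2 be integers, let c ⊆ S_d be the conjugacy class of permutations of cycle type (m,1^{d−m}) (a single m-cycle), and let γ₀ ∈ c. For every integer b ≥ 0, the number of tuples (α, β, γ_1, …, γ_b) ∈ S_d × S_d × c^b with γ_1 γ_2 ⋯ γ_b = α β α^{−1} β^{−1} equals d! · Σ_χ (|c| · χ(γ₀) / χ(1))^b, where the sum ranges over the irreducible complex characters χ of the symmetric group S_d. -/
open Finset CategoryTheory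

/-!
Column orthogonality `∑_χ χ(1) χ(g) = |G| · [g = 1]` turns the count into
`|G|⁻¹ ∑_χ χ(1) ∑_{α,β,γ} χ(γ₁⋯γ_b [α,β]⁻¹)`. It comes from splitting the regular
representation into irreducibles (Maschke), each `V_χ` occurring `χ(1)` times by row
orthogonality. On an irreducible `V_χ`, Schur's lemma makes the class sum of `c` act as
the scalar `|c| χ(γ₀) / χ(1)` and `∑_{α,β} [α,β]` act as `(|G| / χ(1))²`, so the inner
sum is the trace of a scalar.
-/

universe u

theorem LinearMap.trace_eq_trace_restrict_add_trace_restrict {K M : Type*} [Field K]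
    [AddCommGroup M] [Module K M] [FiniteDimensional K M] {p q : Submodule K M}
    (hpq : IsCompl p q) {f : M →ₗ[K] M} (hp : Set.MapsTo f p p) (hq : Set.MapsTo f q q) :
    trace K M f = trace K p (f.restrict hp) + trace K q (f.restrict hq) := by
  have hN : DirectSum.IsInternal (fun b : Bool => cond b p q) :=
    (DirectSum.isInternal_submodule_iff_isCompl _ (i := true) (j := false) (by decide)
      (by ext b; cases b <;> simp)).mpr hpq
  rw [trace_eq_sum_trace_restrict hN (f := f) (fun b => by cases b <;> assumption),
    Fintype.sum_bool]
  rfl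

theorem MonoidHom.sum_piFinset_ofFn_prod {M R : Type*} [Monoid M] [Semiring R] (f : M →* R)
    (s : Finset M) : ∀ b : ℕ,
    ∑ γ ∈ Fintype.piFinset (fun _ : Fin b => s), f (List.ofFn γ).prod = (∑ x ∈ s, f x) ^ b
  | 0 => by simp
  | b + 1 => by
    have hsplit := filter_piFinset_eq_map_consEquiv (fun _ : Fin (b + 1) => s) (fun _ => True)
    simp only [filter_true] at hsplit
    rw [hsplit, sum_map, sum_product, pow_succ', ← MonoidHom.sum_piFinset_ofFn_prod f s b,
      sum_mul_sum]
    simp only [Function.Embedding.coeFn_mk, Fin.consEquiv_apply, List.ofFn_succ, Fin.cons_zero,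
      Fin.cons_succ, List.prod_cons, map_mul]
    rfl

theorem Subrepresentation.isCompl_toSubmodule {k G V : Type*} [Field k] [Monoid G]
    [AddCommGroup V] [Module k V] {ρ : Representation k G V} {U U' : Subrepresentation ρ}
    (h : IsCompl U U') : IsCompl U.toSubmodule U'.toSubmodule :=
  ⟨disjoint_iff.mpr (congrArg Subrepresentation.toSubmodule (disjoint_iff.mp h.1)),
    codisjoint_iff.mpr (congrArg Subrepresentation.toSubmodule (codisjoint_iff.mp h.2))⟩

namespace Representation

theorem character_eq_add_of_isCompl {k G V : Type*} [Field k] [Monoid G] [AddCommGroup V]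
    [Module k V] [FiniteDimensional k V] {ρ : Representation k G V} {U U' : Subrepresentation ρ}
    (h : IsCompl U U') (g : G) :
    ρ.character g = U.toRepresentation.character g + U'.toRepresentation.character g :=
  LinearMap.trace_eq_trace_restrict_add_trace_restrict (Subrepresentation.isCompl_toSubmodule h)
    (fun _ hv => U.apply_mem_toSubmodule g hv) (fun _ hv => U'.apply_mem_toSubmodule g hv)

theorem character_leftRegular {k G : Type*} [Field k] [Group G] [Fintype G] [DecidableEq G]
    (g : G) : (leftRegular k G).character g = if g = 1 then (Nat.card G : k) else 0 := by
  rw [character, LinearMap.trace_eq_matrix_trace k (MonoidAlgebra.basis G k), Matrix.trace]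
  simp [LinearMap.toMatrix_apply, MonoidAlgebra.basis, Finsupp.single_apply,
    Nat.card_eq_fintype_card]

end Representation

theorem FDRep.simple_of_isIrreducible {k G : Type u} [Field k] [IsAlgClosed k] [CharZero k]
    [Group G] [Fintype G] {V : Type u} [AddCommGroup V] [Module k V] [FiniteDimensional k V]
    (ρ : Representation k G V) [ρ.IsIrreducible] : Simple (FDRep.of ρ) := by
  have := invertibleOfNonzero (NeZero.ne (Nat.card G : k))
  rw [FDRep.simple_iff_char_is_norm_one]
  have h := Representation.char_orthonormal ρ ρ
  rw [if_pos ⟨Representation.Equiv.refl ρ⟩] at h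
  exact ((inv_mul_eq_one₀ (NeZero.ne (Nat.card G : k))).mp h).symm

theorem Representation.exists_character_eq_sum {k G : Type u} {ι : Type*} [Field k]
    [IsAlgClosed k] [CharZero k] [Group G] [Fintype G] [Fintype ι] (V : ι → FDRep k G)
    (hall : ∀ W : FDRep k G, Simple W → ∃ i, Nonempty (W ≅ V i))
    {W : Type u} [AddCommGroup W] [Module k W] [FiniteDimensional k W]
    (ρ : Representation k G W) : ∃ n : ι → ℕ, ρ.character = ∑ i, n i • (V i).character := by
  classical
  induction hN : Module.finrank k W using Nat.strong_induction_on generalizing W with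
  | _ N ih =>
  by_cases hsplit : ∃ U : Subrepresentation ρ, U ≠ ⊥ ∧ U ≠ ⊤
  · obtain ⟨U, hUbot, hUtop⟩ := hsplit
    obtain ⟨U', hUU'⟩ := exists_isCompl U
    have hlt : ∀ U'' : Subrepresentation ρ, U'' ≠ ⊤ → Module.finrank k U''.toSubmodule < N :=
      fun U'' h => hN ▸ Submodule.finrank_lt fun h' => h (Subrepresentation.ext h')
    obtain ⟨n, hn⟩ := ih _ (hlt U hUtop) U.toRepresentation rfl
    obtain ⟨n', hn'⟩ := ih _ (hlt U' fun h => hUbot (eq_bot_of_isCompl_top (h ▸ hUU')))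
      U'.toRepresentation rfl
    refine ⟨n + n', funext fun g => ?_⟩
    simp [character_eq_add_of_isCompl hUU' g, hn, hn', add_smul, sum_add_distrib]
  push Not at hsplit
  rcases subsingleton_or_nontrivial W with hW | hW
  · refine ⟨0, funext fun g => ?_⟩
    simp [character, Subsingleton.elim (ρ g) 0]
  · have : ρ.IsIrreducible :=
      { exists_pair_ne := ⟨⊥, ⊤, fun h => bot_ne_top (congrArg Subrepresentation.toSubmodule h)⟩
        eq_bot_or_eq_top := fun U => or_iff_not_imp_left.mpr (hsplit U) }
    obtain ⟨i, ⟨e⟩⟩ := hall _ (FDRep.simple_of_isIrreducible ρ)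
    refine ⟨Pi.single i 1, ?_⟩
    rw [Fintype.sum_eq_single i fun j hj => by simp [hj], Pi.single_eq_same, one_smul]
    exact FDRep.char_iso e

namespace FDRep

variable {k G : Type u} [Field k] [IsAlgClosed k] [CharZero k] [Group G] [Fintype G]

omit [IsAlgClosed k] [CharZero k] [Fintype G] in
@[simp]
theorem trace_ρ (V : FDRep k G) (g : G) : LinearMap.trace k V (V.ρ g) = V.character g := rfl

section Orthogonality

variable {ι : Type*} {V : ι → FDRep k G}

theorem char_orthonormal_of_pairwise_not_iso [DecidableEq ι] (hirr : ∀ i, Simple (V i))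
    (hdist : ∀ i j, i ≠ j → ¬ Nonempty (V i ≅ V j)) (i j : ι) :
    (Nat.card G : k)⁻¹ * ∑ g, (V i).character g * (V j).character g⁻¹ =
      if i = j then 1 else 0 := by
  have := invertibleOfNonzero (NeZero.ne (Nat.card G : k))
  have := hirr i
  have := hirr j
  rw [char_orthonormal]
  by_cases hij : i = j
  · subst hij
    simp [Nonempty.intro (Iso.refl (V i))]
  · simp [hij, hdist i j hij]

theorem sum_character_one_mul_character [Fintype ι] [DecidableEq G] (hirr : ∀ i, Simple (V i))
    (hdist : ∀ i j, i ≠ j → ¬ Nonempty (V i ≅ V j))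
    (hall : ∀ W : FDRep k G, Simple W → ∃ i, Nonempty (W ≅ V i)) (g : G) :
    ∑ i, (V i).character 1 * (V i).character g = if g = 1 then (Nat.card G : k) else 0 := by
  classical
  obtain ⟨n, hn⟩ := Representation.exists_character_eq_sum V hall (Representation.leftRegular k G)
  have hmult : ∀ j, (V j).character 1 = n j := by
    intro j
    have h := congrArg (fun χ : G → k => (Nat.card G : k)⁻¹ * ∑ g, χ g * (V j).character g⁻¹) hn
    simp only [Representation.character_leftRegular, ite_mul, zero_mul, sum_ite_eq', mem_univ,
      if_true, inv_one] at h
    rw [inv_mul_cancel_left₀ (NeZero.ne _)] at h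
    rw [h]
    calc (Nat.card G : k)⁻¹ * ∑ g, (∑ i, n i • (V i).character) g * (V j).character g⁻¹
        = ∑ i, (n i : k) *
            ((Nat.card G : k)⁻¹ * ∑ g, (V i).character g * (V j).character g⁻¹) := by
          simp only [Finset.sum_apply, nsmul_eq_mul, Pi.mul_apply, Pi.natCast_apply, sum_mul,
            mul_sum]
          rw [sum_comm]
          exact sum_congr rfl fun _ _ => sum_congr rfl fun _ _ => by ring
      _ = n j := by simp_rw [char_orthonormal_of_pairwise_not_iso hirr hdist]; simp
  rw [← Representation.character_leftRegular (k := k), hn]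
  simp [Finset.sum_apply, hmult, mul_comm]

theorem card_filter_eq_one_eq_sum_character [Fintype ι] [DecidableEq G]
    (hirr : ∀ i, Simple (V i)) (hdist : ∀ i j, i ≠ j → ¬ Nonempty (V i ≅ V j))
    (hall : ∀ W : FDRep k G, Simple W → ∃ i, Nonempty (W ≅ V i))
    {α : Type*} (S : Finset α) (u : α → G) :
    (#{t ∈ S | u t = 1} : k) =
      (Nat.card G : k)⁻¹ * ∑ i, (V i).character 1 * ∑ t ∈ S, (V i).character (u t) := by
  calc (#{t ∈ S | u t = 1} : k)
      = (Nat.card G : k)⁻¹ * ∑ t ∈ S, if u t = 1 then (Nat.card G : k) else 0 := by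
        rw [← sum_filter, sum_const, nsmul_eq_mul]
        field_simp
    _ = _ := by
        simp_rw [← sum_character_one_mul_character hirr hdist hall, mul_sum]
        rw [sum_comm]

end Orthogonality

variable (V : FDRep k G) [Simple V]

theorem character_one_ne_zero : V.character 1 ≠ 0 := by
  intro h
  have hnorm := (simple_iff_char_is_norm_one V).mp inferInstance
  rw [char_one, Nat.cast_eq_zero, Module.finrank_zero_iff] at h
  have hzero : ∀ g, V.character g = 0 := fun g => by
    simp [character, Subsingleton.elim (V.ρ g) 0]
  simp only [hzero, mul_zero, sum_const_zero] at hnorm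
  exact NeZero.ne (Nat.card G : k) hnorm.symm

theorem eq_smul_one_of_commute {f : Module.End k V} (hf : ∀ g, Commute f (V.ρ g)) :
    f = (LinearMap.trace k V f / V.character 1) • 1 := by
  let φ : V ⟶ V := ⟨FGModuleCat.ofHom f, fun g => by ext v; exact LinearMap.congr_fun (hf g) v⟩
  obtain ⟨c, hc⟩ := endomorphism_simple_eq_smul_id k φ
  have hc' : c • (1 : Module.End k V) = f := congrArg (fun φ : V ⟶ V => φ.hom.hom.hom) hc
  rw [← hc', map_smul, LinearMap.trace_one, ← char_one, smul_eq_mul,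
    mul_div_cancel_right₀ _ (character_one_ne_zero V)]

theorem sum_conj_eq_smul (a : G) :
    ∑ β, V.ρ (β * a * β⁻¹) = (Nat.card G * V.character a / V.character 1) • 1 := by
  have hcomm : ∀ g, Commute (∑ β, V.ρ (β * a * β⁻¹)) (V.ρ g) := fun g => by
    simp only [Commute, SemiconjBy, sum_mul, mul_sum, ← map_mul]
    exact Fintype.sum_equiv (Equiv.mulLeft g⁻¹) _ _ fun β => by simp [mul_assoc]
  rw [eq_smul_one_of_commute V hcomm, map_sum]
  simp_rw [trace_ρ, char_conj, sum_const, card_univ, nsmul_eq_mul, Nat.card_eq_fintype_card]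

theorem sum_character_smul_inv_eq_smul :
    ∑ α, V.character α • V.ρ α⁻¹ = (Nat.card G / V.character 1) • 1 := by
  have hcomm : ∀ g, Commute (∑ α, V.character α • V.ρ α⁻¹) (V.ρ g) := fun g => by
    simp only [Commute, SemiconjBy, sum_mul, mul_sum, smul_mul_assoc, mul_smul_comm, ← map_mul]
    refine Fintype.sum_equiv (MulAut.conj g⁻¹).toEquiv _ _ fun α => ?_
    simp [mul_assoc, ← char_conj V α g⁻¹]
  rw [eq_smul_one_of_commute V hcomm, map_sum]
  simp_rw [map_smul, trace_ρ, smul_eq_mul, (simple_iff_char_is_norm_one V).mp inferInstance]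

theorem sum_commutator_eq_smul :
    ∑ α, ∑ β, V.ρ (α * β * α⁻¹ * β⁻¹) = (Nat.card G / V.character 1) ^ 2 • 1 := by
  calc ∑ α, ∑ β, V.ρ (α * β * α⁻¹ * β⁻¹)
      = ∑ β, (∑ α, V.ρ (α * β * α⁻¹)) * V.ρ β⁻¹ := by
        rw [sum_comm]
        simp only [sum_mul, map_mul]
    _ = (Nat.card G / V.character 1) • ∑ β, V.character β • V.ρ β⁻¹ := by
        simp only [sum_conj_eq_smul, smul_mul_assoc, one_mul, smul_sum, smul_smul]
        congr! 2
        ring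
    _ = (Nat.card G / V.character 1) ^ 2 • 1 := by
        rw [sum_character_smul_inv_eq_smul, smul_smul, sq]

theorem sum_isConj_eq_smul (γ₀ : G) (S : Finset G) (hS : ∀ σ, σ ∈ S ↔ IsConj γ₀ σ) :
    ∑ σ ∈ S, V.ρ σ = (#S * V.character γ₀ / V.character 1) • 1 := by
  have hcomm : ∀ g, Commute (∑ σ ∈ S, V.ρ σ) (V.ρ g) := fun g => by
    simp only [Commute, SemiconjBy, sum_mul, mul_sum, ← map_mul]
    refine sum_nbij' (fun σ => g⁻¹ * σ * g) (fun σ => g * σ * g⁻¹) ?_ ?_ ?_ ?_ ?_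
    · exact fun σ hσ => (hS _).mpr (((hS σ).mp hσ).trans (isConj_iff.mpr ⟨g⁻¹, by group⟩))
    · exact fun σ hσ => (hS _).mpr (((hS σ).mp hσ).trans (isConj_iff.mpr ⟨g, rfl⟩))
    all_goals intros; group
  rw [eq_smul_one_of_commute V hcomm, map_sum]
  congr 2
  rw [sum_congr rfl fun σ hσ => ?_, sum_const, nsmul_eq_mul]
  obtain ⟨c, rfl⟩ := isConj_iff.mp ((hS σ).mp hσ)
  exact char_conj V γ₀ c

theorem sum_character_ofFn_prod_mul_commutator_inv (γ₀ : G) (c : Finset G)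
    (hc : ∀ σ, σ ∈ c ↔ IsConj γ₀ σ) (b : ℕ) :
    ∑ α, ∑ β, ∑ γ ∈ Fintype.piFinset (fun _ : Fin b => c),
        V.character ((List.ofFn γ).prod * (α * β * α⁻¹ * β⁻¹)⁻¹) =
      (#c * V.character γ₀ / V.character 1) ^ b * (Nat.card G ^ 2 / V.character 1) := by
  have hop : ∑ α, ∑ β, ∑ γ ∈ Fintype.piFinset (fun _ : Fin b => c),
      V.ρ ((List.ofFn γ).prod * (α * β * α⁻¹ * β⁻¹)⁻¹) =
        ((#c * V.character γ₀ / V.character 1) ^ b * (Nat.card G / V.character 1) ^ 2) • 1 :=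
    calc _ = (∑ γ ∈ Fintype.piFinset (fun _ : Fin b => c), V.ρ (List.ofFn γ).prod) *
          ∑ β, ∑ α, V.ρ (β * α * β⁻¹ * α⁻¹) := by
          rw [sum_comm]
          simp only [mul_sum, sum_mul, ← map_mul]
          congr! 4
          group
      _ = _ := by
          rw [V.ρ.sum_piFinset_ofFn_prod, sum_isConj_eq_smul V γ₀ c hc, sum_commutator_eq_smul,
            smul_pow, one_pow, smul_mul_smul_comm, one_mul]
  simp only [← trace_ρ, ← map_sum, hop, map_smul, LinearMap.trace_one, ← char_one, smul_eq_mul]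
  field_simp [character_one_ne_zero V]

end FDRep

theorem FDRep.card_ofFn_prod_eq_commutator {k G : Type u} {ι : Type*} [Field k]
    [IsAlgClosed k] [CharZero k] [Group G] [Fintype G] [Fintype ι] (V : ι → FDRep k G)
    (hirr : ∀ i, Simple (V i)) (hdist : ∀ i j, i ≠ j → ¬ Nonempty (V i ≅ V j))
    (hall : ∀ W : FDRep k G, Simple W → ∃ i, Nonempty (W ≅ V i))
    (p : G → Prop) (γ₀ : G) (hp : ∀ σ, p σ ↔ IsConj γ₀ σ) (b : ℕ) :
    (Nat.card {t : G × G × (Fin b → G) //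
        (∀ i, p (t.2.2 i)) ∧ (List.ofFn t.2.2).prod = t.1 * t.2.1 * t.1⁻¹ * t.2.1⁻¹} : k) =
      Nat.card G * ∑ i, ((Nat.card {σ // p σ} : k) * (V i).character γ₀ /
        (V i).character 1) ^ b := by
  classical
  set c : Finset G := {σ | p σ}
  have hsol : Nat.card {t : G × G × (Fin b → G) //
      (∀ i, p (t.2.2 i)) ∧ (List.ofFn t.2.2).prod = t.1 * t.2.1 * t.1⁻¹ * t.2.1⁻¹} =
        #{t ∈ univ ×ˢ univ ×ˢ Fintype.piFinset (fun _ : Fin b => c) |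
          (List.ofFn t.2.2).prod * (t.1 * t.2.1 * t.1⁻¹ * t.2.1⁻¹)⁻¹ = 1} := by
    rw [Nat.card_eq_fintype_card, Fintype.card_subtype]
    congr 1
    ext t
    simp only [c, mem_filter, mem_product, mem_univ, Fintype.mem_piFinset, true_and,
      mul_inv_eq_one]
  have hcard : Nat.card {σ // p σ} = #c := by
    rw [Nat.card_eq_fintype_card, Fintype.card_subtype]
  rw [hsol, hcard, card_filter_eq_one_eq_sum_character hirr hdist hall]
  simp only [sum_product]
  simp_rw [sum_character_ofFn_prod_mul_commutator_inv (V _) γ₀ c (by simp [c, hp])]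
  rw [mul_sum, mul_sum]
  refine sum_congr rfl fun i _ => ?_
  have := character_one_ne_zero (V i)
  field_simp

theorem statement4_general (d m : ℕ)
    (γ₀ : Equiv.Perm (Fin d)) (hγ₀ : γ₀.cycleType = {m}) (b : ℕ)
    (ι : Type) [Fintype ι] (V : ι → FDRep ℂ (Equiv.Perm (Fin d)))
    (hirr : ∀ i, Simple (V i))
    (hdist : ∀ i j, i ≠ j → ¬ Nonempty (V i ≅ V j))
    (hall : ∀ W : FDRep ℂ (Equiv.Perm (Fin d)), Simple W → ∃ i, Nonempty (W ≅ V i)) :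
    (Nat.card {t : Equiv.Perm (Fin d) × Equiv.Perm (Fin d) × (Fin b → Equiv.Perm (Fin d)) //
        (∀ i, (t.2.2 i).cycleType = {m}) ∧
        (List.ofFn t.2.2).prod = t.1 * t.2.1 * t.1⁻¹ * t.2.1⁻¹} : ℂ) =
      (Nat.factorial d : ℂ) *
        ∑ i, (((Nat.card {σ : Equiv.Perm (Fin d) // σ.cycleType = {m}}) : ℂ) *
            (V i).character γ₀ / (V i).character 1) ^ b := by
  have hconj : ∀ σ : Equiv.Perm (Fin d), σ.cycleType = {m} ↔ IsConj γ₀ σ := fun σ => by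
    rw [Equiv.Perm.isConj_iff_cycleType_eq, hγ₀, eq_comm]
  rw [FDRep.card_ofFn_prod_eq_commutator V hirr hdist hall _ γ₀ hconj, Nat.card_perm,
    Nat.card_eq_fintype_card, Fintype.card_fin]

/-- Frobenius's counting formula for the number of tuples
`(α, β, γ₁, …, γ_b) ∈ S_d × S_d × c^b` with `γ₁⋯γ_b = αβα⁻¹β⁻¹`, where `c` is the
conjugacy class of cycle type `(m, 1^{d−m})`: it equals
`d! · Σ_χ (|c|·χ(γ₀)/χ(1))^b`, the sum being over the irreducible complex
characters of `S_d` (given here by a complete family `V` of pairwise non-isomorphic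
irreducible representations). -/
theorem statement4 (d m : ℕ) (hm : 2 ≤ m) (hmd : m ≤ d)
    (γ₀ : Equiv.Perm (Fin d)) (hγ₀ : γ₀.cycleType = {m}) (b : ℕ)
    (ι : Type) [Fintype ι] (V : ι → FDRep ℂ (Equiv.Perm (Fin d)))
    (hirr : ∀ i, Simple (V i))
    (hdist : ∀ i j, i ≠ j → ¬ Nonempty (V i ≅ V j))
    (hall : ∀ W : FDRep ℂ (Equiv.Perm (Fin d)), Simple W → ∃ i, Nonempty (W ≅ V i)) :
    (Nat.card {t : Equiv.Perm (Fin d) × Equiv.Perm (Fin d) × (Fin b → Equiv.Perm (Fin d)) //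
        (∀ i, (t.2.2 i).cycleType = {m}) ∧
        (List.ofFn t.2.2).prod = t.1 * t.2.1 * t.1⁻¹ * t.2.1⁻¹} : ℂ) =
      (Nat.factorial d : ℂ) *
        ∑ i, (((Nat.card {σ : Equiv.Perm (Fin d) // σ.cycleType = {m}}) : ℂ) *
            (V i).character γ₀ / (V i).character 1) ^ b :=
  statement4_general d m γ₀ hγ₀ b ι V hirr hdist hall
end

section
/- For all complex numbers w and z with |w| < 1 and z ≠ 0, the following Jacobi triple product identity holds: ∏_{n≥1} (1 − w^{2n})(1 + z·w^{2n−1})(1 + z^{−1}·w^{2n−1}) = Σ_{n∈ℤ} z^n · w^{n²}, where the infinite product converges and the bilateral series converges absolutely. -/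
/-!
Gauss's `q`-binomial theorem `∏_{i<n} (1 + x t^i) = ∑_k t^(k choose 2) [n, k]_t x^k`, taken with
`t = q²`, `x = z q^(1-2N)` and `n = 2N`, gives the finite triple product
`∏_{m<N} (1 + z q^(2m+1)) (1 + z⁻¹ q^(2m+1)) = ∑_{|j| ≤ N} [2N, N+j]_{q²} z^j q^(j²)`.
For `|q| < 1` each Gaussian binomial `[a+k, k]_t = (t;t)_{a+k} / ((t;t)_a (t;t)_k)` tends to
`1 / (t;t)_∞` as `a, k → ∞` and all of them are bounded by one constant, so dominated convergence
for series (Tannery's theorem) lets `N → ∞` against the absolutely convergent theta series.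
Multiplying by `(q²;q²)_∞ ≠ 0` gives the identity.
-/

open Finset

namespace JacobiTripleProduct

section Algebra

variable {R : Type*} [CommRing R] (t : R)

/-- The `q`-Pochhammer symbol `(t; t)_m`. -/
def qPochhammer (m : ℕ) : R := ∏ i ∈ range m, (1 - t ^ (i + 1))

def gaussBinom : ℕ → ℕ → R
  | _, 0 => 1
  | 0, _ + 1 => 0
  | n + 1, k + 1 => gaussBinom n k + t ^ (k + 1) * gaussBinom n (k + 1)

@[simp] lemma gaussBinom_zero_right (n : ℕ) : gaussBinom t n 0 = 1 := by cases n <;> rfl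

lemma gaussBinom_succ_succ (n k : ℕ) :
    gaussBinom t (n + 1) (k + 1) = gaussBinom t n k + t ^ (k + 1) * gaussBinom t n (k + 1) :=
  rfl

lemma gaussBinom_eq_zero_of_lt : ∀ {n k : ℕ}, n < k → gaussBinom t n k = 0
  | 0, _ + 1, _ => rfl
  | n + 1, k + 1, h => by
    rw [gaussBinom_succ_succ, gaussBinom_eq_zero_of_lt (by omega),
      gaussBinom_eq_zero_of_lt (by omega), mul_zero, add_zero]

@[simp] lemma gaussBinom_self : ∀ n : ℕ, gaussBinom t n n = 1
  | 0 => rfl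
  | n + 1 => by
    rw [gaussBinom_succ_succ, gaussBinom_self n, gaussBinom_eq_zero_of_lt t n.lt_succ_self,
      mul_zero, add_zero]

lemma qPochhammer_succ (m : ℕ) : qPochhammer t (m + 1) = qPochhammer t m * (1 - t ^ (m + 1)) :=
  prod_range_succ _ _

theorem gaussBinom_mul_qPochhammer_mul_qPochhammer (a k : ℕ) :
    gaussBinom t (a + k) k * qPochhammer t a * qPochhammer t k = qPochhammer t (a + k) := by
  induction k generalizing a with
  | zero => simp [qPochhammer]
  | succ k ihk =>
    induction a with
    | zero => simp [qPochhammer]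
    | succ a iha =>
      have ih₁ := ihk (a + 1)
      rw [show a + 1 + k = a + k + 1 by omega] at ih₁
      rw [show a + (k + 1) = a + k + 1 by omega] at iha
      rw [show a + 1 + (k + 1) = a + k + 1 + 1 by omega, gaussBinom_succ_succ,
        qPochhammer_succ t (a + k + 1), qPochhammer_succ t a, qPochhammer_succ t k]
      rw [qPochhammer_succ t a] at ih₁
      rw [qPochhammer_succ t k] at iha
      linear_combination (1 - t ^ (k + 1)) * ih₁ + t ^ (k + 1) * (1 - t ^ (a + 1)) * iha

theorem prod_one_add_mul_pow_eq_sum_gaussBinom (x : R) (n : ℕ) :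
    ∏ i ∈ range n, (1 + x * t ^ i) =
      ∑ k ∈ range (n + 1), t ^ k.choose 2 * gaussBinom t n k * x ^ k := by
  induction n generalizing x with
  | zero => simp
  | succ n ih =>
    set u : ℕ → R := fun k => t ^ k.choose 2 * gaussBinom t n k * (t * x) ^ k
    have shift : ∑ k ∈ range (n + 1), u (k + 1) + 1 = ∑ k ∈ range (n + 1), u k := by
      have hu0 : u 0 = 1 := by simp [u]
      rw [← hu0, ← sum_range_succ', sum_range_succ, add_eq_left]
      simp [u, gaussBinom_eq_zero_of_lt t n.lt_succ_self]
    calc ∏ i ∈ range (n + 1), (1 + x * t ^ i)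
        = (1 + x) * ∏ i ∈ range n, (1 + t * x * t ^ i) := by
          rw [prod_range_succ', mul_comm]; simp only [pow_zero, mul_one, pow_succ]; ring_nf
      _ = (1 + x) * ∑ k ∈ range (n + 1), u k := by rw [ih]
      _ = ∑ k ∈ range (n + 1), (x * u k + u (k + 1)) + 1 := by
          rw [sum_add_distrib, ← mul_sum, add_assoc, shift, add_mul, one_mul, add_comm]
      _ = ∑ k ∈ range (n + 1 + 1), t ^ k.choose 2 * gaussBinom t (n + 1) k * x ^ k := by
          rw [sum_range_succ' _ (n + 1), gaussBinom_zero_right, Nat.choose_zero_succ, pow_zero,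
            pow_zero, one_mul, mul_one]
          refine congrArg (· + 1) (sum_congr rfl fun k _ => ?_)
          simp only [u, gaussBinom_succ_succ, Nat.choose_succ_succ', Nat.choose_one_right]
          ring

end Algebra

lemma two_mul_choose_two_add_self (k : ℕ) : 2 * k.choose 2 + k = k * k := by
  induction k with
  | zero => rfl
  | succ k ih => rw [Nat.choose_succ_succ', Nat.choose_one_right]; linarith

lemma sum_range_two_mul_add_one (N : ℕ) : ∑ m ∈ range N, (2 * m + 1) = N ^ 2 := by
  induction N with
  | zero => rfl
  | succ N ih => rw [sum_range_succ, ih]; ring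

section FiniteTripleProduct

variable {K : Type*} [Field K] {q z : K}

lemma prod_one_add_mul_odd_pow_eq_zpow_mul_prod (hq : q ≠ 0) (hz : z ≠ 0) (N : ℕ) :
    ∏ m ∈ range N, (1 + z * q ^ (2 * m + 1)) * (1 + z⁻¹ * q ^ (2 * m + 1)) =
      z ^ (-(N : ℤ)) * q ^ (N ^ 2) *
        ∏ i ∈ range (2 * N), (1 + z * q ^ (1 - 2 * N : ℤ) * (q ^ 2) ^ i) := by
  have hsplit : ∏ i ∈ range (2 * N), (1 + z * q ^ (1 - 2 * N : ℤ) * (q ^ 2) ^ i) =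
      (∏ m ∈ range N, (1 + z * q ^ (-(2 * m + 1 : ℕ) : ℤ))) *
        ∏ m ∈ range N, (1 + z * q ^ (2 * m + 1 : ℕ)) := by
    have hexp (i : ℕ) : q ^ (1 - 2 * N : ℤ) * (q ^ 2) ^ i = q ^ (2 * i + 1 - 2 * N : ℤ) := by
      rw [← zpow_natCast, ← zpow_natCast, ← zpow_mul, ← zpow_add₀ hq]
      congr 1
      push_cast
      ring
    simp only [mul_assoc, hexp]
    rw [two_mul, prod_range_add, ← prod_range_reflect]
    congr 1 <;> refine prod_congr rfl fun m hm => ?_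
    · have := mem_range.1 hm
      congr 3
      omega
    · rw [← zpow_natCast]
      congr 3
      push_cast
      ring
  have hpair (m : ℕ) : 1 + z⁻¹ * q ^ (2 * m + 1) =
      z⁻¹ * q ^ (2 * m + 1) * (1 + z * q ^ (-(2 * m + 1 : ℕ) : ℤ)) := by
    rw [zpow_neg, zpow_natCast]
    field_simp
    ring
  have hcoef : ∏ m ∈ range N, z⁻¹ * q ^ (2 * m + 1) = z ^ (-(N : ℤ)) * q ^ (N ^ 2) := by
    rw [prod_mul_distrib, prod_const, card_range, prod_pow_eq_pow_sum, sum_range_two_mul_add_one,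
      zpow_neg, zpow_natCast, inv_pow]
  simp_rw [hpair, hsplit, ← hcoef, ← prod_mul_distrib]
  exact prod_congr rfl fun m _ => by ring

lemma gaussBinom_eq_div {t : K} (ht : ∀ m, qPochhammer t m ≠ 0) (a k : ℕ) :
    gaussBinom t (a + k) k = qPochhammer t (a + k) / (qPochhammer t a * qPochhammer t k) := by
  rw [eq_div_iff (mul_ne_zero (ht a) (ht k)), ← mul_assoc,
    gaussBinom_mul_qPochhammer_mul_qPochhammer]

theorem prod_one_add_mul_odd_pow_eq_sum_gaussBinom (hq : q ≠ 0) (hz : z ≠ 0) (N : ℕ) :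
    ∏ m ∈ range N, (1 + z * q ^ (2 * m + 1)) * (1 + z⁻¹ * q ^ (2 * m + 1)) =
      ∑ j ∈ Icc (-(N : ℤ)) N, gaussBinom (q ^ 2) (2 * N) (N + j).toNat * z ^ j * q ^ (j ^ 2) := by
  rw [prod_one_add_mul_odd_pow_eq_zpow_mul_prod hq hz, prod_one_add_mul_pow_eq_sum_gaussBinom,
    mul_sum]
  refine sum_nbij' (fun k => (k : ℤ) - N) (fun j => (N + j).toNat) ?_ ?_ ?_ ?_ ?_
  · intro k hk
    simp only [mem_range, mem_Icc] at hk ⊢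
    omega
  · intro j hj
    simp only [mem_range, mem_Icc] at hj ⊢
    omega
  · intro k _
    simp
  · intro j hj
    simp only [mem_Icc] at hj
    omega
  · intro k _
    have hchoose : (2 * k.choose 2 + k : ℤ) = k * k := mod_cast two_mul_choose_two_add_self k
    simp only [add_sub_cancel, Int.toNat_natCast]
    have hzpow : z ^ (-(N : ℤ)) * z ^ k = z ^ ((k : ℤ) - N) := by
      rw [← zpow_natCast, ← zpow_add₀ hz]
      ring_nf
    have hqpow : q ^ (N ^ 2) * (q ^ 2) ^ k.choose 2 * (q ^ (1 - 2 * N : ℤ)) ^ k =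
        q ^ (((k : ℤ) - N) ^ 2) := by
      simp only [← zpow_natCast, ← zpow_mul, ← zpow_add₀ hq]
      congr 1
      push_cast
      linear_combination hchoose
    rw [← hzpow, ← hqpow]
    ring

def tripleProductFactor (w z : K) (n : ℕ) : K :=
  (1 - w ^ (2 * (n + 1))) * (1 + z * w ^ (2 * n + 1)) * (1 + z⁻¹ * w ^ (2 * n + 1))

lemma prod_range_tripleProductFactor (w z : K) (N : ℕ) :
    ∏ n ∈ range N, tripleProductFactor w z n =
      qPochhammer (w ^ 2) N *
        ∏ m ∈ range N, (1 + z * w ^ (2 * m + 1)) * (1 + z⁻¹ * w ^ (2 * m + 1)) := by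
  simp only [tripleProductFactor, mul_assoc, prod_mul_distrib, qPochhammer, pow_mul]

end FiniteTripleProduct

section Analytic

open Filter Topology

variable {𝕜 : Type*} [NormedField 𝕜] {t : 𝕜}

lemma norm_pow_lt_one (ht : ‖t‖ < 1) {n : ℕ} (hn : n ≠ 0) : ‖t ^ n‖ < 1 := by
  rw [norm_pow]
  exact pow_lt_one₀ (norm_nonneg t) ht hn

lemma one_sub_pow_succ_ne_zero (ht : ‖t‖ < 1) (n : ℕ) : 1 - t ^ (n + 1) ≠ 0 := by
  refine sub_ne_zero.2 fun h => ?_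
  have := norm_pow_lt_one ht n.succ_ne_zero
  rw [← h, norm_one] at this
  exact lt_irrefl _ this

lemma qPochhammer_ne_zero (ht : ‖t‖ < 1) (m : ℕ) : qPochhammer t m ≠ 0 :=
  prod_ne_zero_iff.2 fun n _ => one_sub_pow_succ_ne_zero ht n

lemma summable_norm_neg_pow_succ (ht : ‖t‖ < 1) : Summable fun n : ℕ => ‖-t ^ (n + 1)‖ := by
  simpa using (summable_nat_add_iff 1).2 (summable_geometric_of_lt_one (norm_nonneg t) ht)

lemma summable_pow_mul_pow_sq {c r : ℝ} (hc : 0 ≤ c) (hr₀ : 0 ≤ r) (hr : r < 1) :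
    Summable fun n : ℕ => c ^ n * r ^ (n ^ 2) := by
  have hlim : Tendsto (fun n : ℕ => c * r ^ n) atTop (𝓝 0) := by
    simpa using (tendsto_pow_atTop_nhds_zero_of_lt_one hr₀ hr).const_mul c
  refine Summable.of_norm_bounded_eventually_nat summable_geometric_two ?_
  filter_upwards [hlim.eventually_le_const (by norm_num : (0 : ℝ) < 1 / 2)] with n hn
  rw [Real.norm_of_nonneg (by positivity), sq, pow_mul, ← mul_pow]
  exact pow_le_pow_left₀ (by positivity) hn n

lemma summable_norm_zpow_mul_zpow_sq {w : 𝕜} (hw : ‖w‖ < 1) (z : 𝕜) :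
    Summable fun n : ℤ => ‖z ^ n * w ^ (n ^ 2)‖ := by
  have key (y : 𝕜) : Summable fun n : ℕ => ‖y ^ n * w ^ (n ^ 2)‖ := by
    simpa [norm_pow] using summable_pow_mul_pow_sq (norm_nonneg y) (norm_nonneg w) hw
  refine Summable.of_nat_of_neg ?_ ?_
  · refine (key z).congr fun n => ?_
    rw [← Nat.cast_pow, zpow_natCast, zpow_natCast]
  · refine (key z⁻¹).congr fun n => ?_
    rw [neg_sq, ← Nat.cast_pow, zpow_neg, zpow_natCast, zpow_natCast, inv_pow]

lemma summable_norm_mul_pow_two_mul_add_one {w : 𝕜} (hw : ‖w‖ < 1) (c : 𝕜) :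
    Summable fun n : ℕ => ‖c * w ^ (2 * n + 1)‖ := by
  have hw2 : ‖w‖ ^ 2 < 1 := pow_lt_one₀ (norm_nonneg w) hw two_ne_zero
  refine ((summable_geometric_of_lt_one (by positivity) hw2).mul_left (‖c‖ * ‖w‖)).congr
    fun n => ?_
  rw [norm_mul, norm_pow, pow_add, pow_mul]
  ring

variable [CompleteSpace 𝕜]

lemma multipliable_one_sub_pow_succ (ht : ‖t‖ < 1) :
    Multipliable fun n : ℕ => 1 - t ^ (n + 1) := by
  simpa only [← sub_eq_add_neg] using multipliable_one_add_of_summable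
    (f := fun n : ℕ => -t ^ (n + 1)) (summable_norm_neg_pow_succ ht)

lemma tprod_one_sub_pow_succ_ne_zero (ht : ‖t‖ < 1) : ∏' n : ℕ, (1 - t ^ (n + 1)) ≠ 0 := by
  have := tprod_one_add_ne_zero_of_summable (f := fun n : ℕ => -t ^ (n + 1))
    (fun n => by rw [← sub_eq_add_neg]; exact one_sub_pow_succ_ne_zero ht n)
    (summable_norm_neg_pow_succ ht)
  simpa only [← sub_eq_add_neg] using this

lemma tendsto_qPochhammer (ht : ‖t‖ < 1) :
    Tendsto (qPochhammer t) atTop (𝓝 (∏' n : ℕ, (1 - t ^ (n + 1)))) :=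
  (multipliable_one_sub_pow_succ ht).hasProd.tendsto_prod_nat

lemma tendsto_gaussBinom (ht : ‖t‖ < 1) :
    Tendsto (fun p : ℕ × ℕ => gaussBinom t (p.1 + p.2) p.2) atTop
      (𝓝 (∏' n : ℕ, (1 - t ^ (n + 1)))⁻¹) := by
  have hP := tendsto_qPochhammer ht
  have hE := tprod_one_sub_pow_succ_ne_zero ht
  have hfst : Tendsto (Prod.fst : ℕ × ℕ → ℕ) atTop atTop := by
    rw [← prod_atTop_atTop_eq]; exact tendsto_fst
  have hsnd : Tendsto (Prod.snd : ℕ × ℕ → ℕ) atTop atTop := by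
    rw [← prod_atTop_atTop_eq]; exact tendsto_snd
  have hadd : Tendsto (fun p : ℕ × ℕ => p.1 + p.2) atTop atTop :=
    tendsto_atTop_mono (fun p => Nat.le_add_left _ _) hsnd
  convert (hP.comp hadd).div ((hP.comp hfst).mul (hP.comp hsnd)) (mul_ne_zero hE hE) using 1
  · ext p
    exact gaussBinom_eq_div (qPochhammer_ne_zero ht) p.1 p.2
  · field_simp

lemma exists_norm_gaussBinom_le (ht : ‖t‖ < 1) : ∃ C, ∀ n k, ‖gaussBinom t n k‖ ≤ C := by
  have hP := tendsto_qPochhammer ht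
  obtain ⟨C₁, hC₁⟩ := (Metric.isBounded_range_of_tendsto _ hP).exists_norm_le
  obtain ⟨C₂, hC₂⟩ := (Metric.isBounded_range_of_tendsto _
    (hP.inv₀ (tprod_one_sub_pow_succ_ne_zero ht))).exists_norm_le
  have hC₁' : ∀ m, ‖qPochhammer t m‖ ≤ C₁ := fun m => hC₁ _ ⟨m, rfl⟩
  have hC₂' : ∀ m, ‖(qPochhammer t m)⁻¹‖ ≤ C₂ := fun m => hC₂ _ ⟨m, rfl⟩
  have hC₁0 : 0 ≤ C₁ := (norm_nonneg _).trans (hC₁' 0)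
  have hC₂0 : 0 ≤ C₂ := (norm_nonneg _).trans (hC₂' 0)
  refine ⟨C₁ * (C₂ * C₂), fun n k => ?_⟩
  rcases lt_or_ge n k with hnk | hkn
  · rw [gaussBinom_eq_zero_of_lt t hnk, norm_zero]
    positivity
  · obtain ⟨a, rfl⟩ := Nat.exists_eq_add_of_le' hkn
    rw [gaussBinom_eq_div (qPochhammer_ne_zero ht), div_eq_mul_inv, mul_inv, norm_mul, norm_mul]
    gcongr
    exacts [hC₁' _, hC₂' _, hC₂' _]

lemma tendsto_toNat_sub_toNat_add (j : ℤ) :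
    Tendsto (fun N : ℕ => (((N : ℤ) - j).toNat, ((N : ℤ) + j).toNat)) atTop atTop := by
  rw [← prod_atTop_atTop_eq]
  exact (tendsto_atTop_atTop.2 fun b => ⟨b + j.natAbs, fun N hN => by omega⟩).prodMk
    (tendsto_atTop_atTop.2 fun b => ⟨b + j.natAbs, fun N hN => by omega⟩)

theorem tendsto_sum_gaussBinom_mul_zpow {w : 𝕜} (hw : ‖w‖ < 1) (z : 𝕜) :
    Tendsto (fun N : ℕ => ∑ j ∈ Icc (-(N : ℤ)) N,
        gaussBinom (w ^ 2) (2 * N) (N + j).toNat * z ^ j * w ^ (j ^ 2)) atTop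
      (𝓝 ((∏' n : ℕ, (1 - (w ^ 2) ^ (n + 1)))⁻¹ * ∑' j : ℤ, z ^ j * w ^ (j ^ 2))) := by
  have hw2 := norm_pow_lt_one hw two_ne_zero
  obtain ⟨C, hC⟩ := exists_norm_gaussBinom_le hw2
  set a : ℕ → ℤ → 𝕜 := fun N j => gaussBinom (w ^ 2) (2 * N) (N + j).toNat * z ^ j * w ^ (j ^ 2)
  have hlim (j : ℤ) : Tendsto (fun N : ℕ => (Icc (-(N : ℤ)) N : Set ℤ).indicator (a N) j) atTop
      (𝓝 ((∏' n : ℕ, (1 - (w ^ 2) ^ (n + 1)))⁻¹ * (z ^ j * w ^ (j ^ 2)))) := by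
    refine (((tendsto_gaussBinom hw2).comp (tendsto_toNat_sub_toNat_add j)).mul_const _).congr' ?_
    filter_upwards [eventually_ge_atTop j.natAbs] with N hN
    rw [Set.indicator_of_mem (by simp only [coe_Icc, Set.mem_Icc]; omega)]
    simp only [Function.comp_apply, a, mul_assoc]
    congr 2
    omega
  have hbound (N : ℕ) (j : ℤ) :
      ‖(Icc (-(N : ℤ)) N : Set ℤ).indicator (a N) j‖ ≤ C * ‖z ^ j * w ^ (j ^ 2)‖ := by
    refine (norm_indicator_le_norm_self _ _).trans ?_
    simp only [a]
    rw [mul_assoc, norm_mul]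
    gcongr
    exact hC _ _
  have := tendsto_tsum_of_dominated_convergence
    ((summable_norm_zpow_mul_zpow_sq hw z).mul_left C) hlim (Eventually.of_forall hbound)
  rw [tsum_mul_left] at this
  exact this.congr fun N => (sum_eq_tsum_indicator (a N) _).symm

theorem multipliable_tripleProductFactor {w : 𝕜} (hw : ‖w‖ < 1) (z : 𝕜) :
    Multipliable (tripleProductFactor w z) := by
  have hw2 := norm_pow_lt_one hw two_ne_zero
  have h₁ := multipliable_one_sub_pow_succ hw2
  have h₂ := multipliable_one_add_of_summable (summable_norm_mul_pow_two_mul_add_one hw z)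
  have h₃ := multipliable_one_add_of_summable (summable_norm_mul_pow_two_mul_add_one hw z⁻¹)
  convert (h₁.mul h₂).mul h₃ using 1
  ext n
  simp only [tripleProductFactor, pow_mul]

theorem tprod_tripleProductFactor {w z : 𝕜} (hw : ‖w‖ < 1) (hw₀ : w ≠ 0) (hz : z ≠ 0) :
    ∏' n, tripleProductFactor w z n = ∑' n : ℤ, z ^ n * w ^ (n ^ 2) := by
  have hw2 := norm_pow_lt_one hw two_ne_zero
  have hlim := (tendsto_qPochhammer hw2).mul (tendsto_sum_gaussBinom_mul_zpow hw z)
  rw [mul_inv_cancel_left₀ (tprod_one_sub_pow_succ_ne_zero hw2)] at hlim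
  refine tendsto_nhds_unique (multipliable_tripleProductFactor hw z).hasProd.tendsto_prod_nat
    (hlim.congr fun N => ?_)
  rw [prod_range_tripleProductFactor, prod_one_add_mul_odd_pow_eq_sum_gaussBinom hw₀ hz]

end Analytic

end JacobiTripleProduct

/-- The Jacobi triple product identity: for `|w| < 1` and `z ≠ 0`,
`∏_{n≥1} (1−w^{2n})(1+z·w^{2n−1})(1+z⁻¹·w^{2n−1}) = Σ_{n∈ℤ} z^n w^{n²}`,
with the product convergent and the bilateral series absolutely convergent. -/
theorem statement10 (w z : ℂ) (hw : ‖w‖ < 1) (hz : z ≠ 0) :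
    Multipliable (fun n : ℕ =>
      (1 - w ^ (2 * (n + 1))) * (1 + z * w ^ (2 * n + 1)) * (1 + z⁻¹ * w ^ (2 * n + 1))) ∧
    Summable (fun n : ℤ => ‖z ^ n * w ^ (n ^ 2)‖) ∧
    (∏' n : ℕ,
        (1 - w ^ (2 * (n + 1))) * (1 + z * w ^ (2 * n + 1)) * (1 + z⁻¹ * w ^ (2 * n + 1))) =
      ∑' n : ℤ, z ^ n * w ^ (n ^ 2) := by
  refine ⟨JacobiTripleProduct.multipliable_tripleProductFactor hw z,
    JacobiTripleProduct.summable_norm_zpow_mul_zpow_sq hw z, ?_⟩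
  rcases eq_or_ne w 0 with rfl | hw₀
  · rw [tsum_eq_single 0 fun n hn => by simp [zero_zpow _ (pow_ne_zero 2 hn)]]
    simp
  · exact JacobiTripleProduct.tprod_tripleProductFactor hw hw₀ hz
end

section
/- In ℚ[[q]], with D = q·d/dq the formal derivation sending Σ a_n q^n to Σ n·a_n q^n, the Eisenstein series satisfy D(E_2) = (E_2² − E_4)/12, D(E_4) = (E_2·E_4 − E_6)/3, and D(E_6) = (E_2·E_6 − E_4²)/2. -/
/-!
Write `E_k = 1 + c_k Σ σ_{k-1}(n) qⁿ`. Comparing coefficients, the three identities become the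
classical evaluations of the convolution sums `Σ_{i+j=N} σ_u(i) σ_v(j)` for
`(u, v) = (1, 1), (1, 3), (1, 5), (3, 3)`. Such a sum is `Σ aᵘ bᵛ` over the positive solutions
`(a, b, x, y)` of `a x + b y = N` (divisors `a, b`, cofactors `x, y`).

Split these solutions once by comparing `a` with `b` and once by comparing `x` with `y`; the swap
`(a, b, x, y) ↦ (b, a, y, x)` and the pivot `(a, b, x, y) ↦ (a, a + b, x - y, y)` carry every
off-diagonal part onto `{a < b}`. Hence if `F(a, a + c) + F(a + c, a) = H(a, c) + H(c, a)`, the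
sum of `F(a, b) - H(a, b)` only sees the diagonals `a = b` and `x = y`, which are divisor sums of
polynomials. Suitable `F` are the polynomials in `Q = a² - ab + b²` and `R = (ab(a - b))²`, with
`H(a, c) = F(-a, c)`: on the diagonal `x = y`, where `a + b = e`, these become polynomials in `e`
and `a(e - a)`, summed over `a` by telescoping.
-/

open Finset

def sigma' (k n : ℕ) : ℕ := ∑ d ∈ n.divisors, d ^ k

noncomputable def E₂ : PowerSeries ℚ :=
  PowerSeries.mk fun n => if n = 0 then 1 else -24 * (sigma' 1 n : ℚ)

noncomputable def E₄ : PowerSeries ℚ :=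
  PowerSeries.mk fun n => if n = 0 then 1 else 240 * (sigma' 3 n : ℚ)

noncomputable def E₆ : PowerSeries ℚ :=
  PowerSeries.mk fun n => if n = 0 then 1 else -504 * (sigma' 5 n : ℚ)

/-- The formal derivation `D = q·d/dq` on `ℚ[[q]]`, sending `Σ aₙ qⁿ` to `Σ n·aₙ qⁿ`. -/
noncomputable def Dq (f : PowerSeries ℚ) : PowerSeries ℚ :=
  PowerSeries.mk fun n => (n : ℚ) * PowerSeries.coeff n f

theorem sum_filter_lt_add_sum_filter_gt_add_sum_filter_eq {ι α M : Type*} [LinearOrder α]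
    [AddCommMonoid M] (s : Finset ι) (u v : ι → α) (f : ι → M) :
    ∑ i ∈ s with u i < v i, f i + ∑ i ∈ s with v i < u i, f i + ∑ i ∈ s with u i = v i, f i =
      ∑ i ∈ s, f i := by
  have hgt : s.filter (fun i => v i < u i) =
      (s.filter fun i => ¬ u i < v i).filter fun i => v i < u i := by
    ext i; simp only [mem_filter]; constructor
    · rintro ⟨hs, h⟩; exact ⟨⟨hs, not_lt.2 h.le⟩, h⟩
    · rintro ⟨⟨hs, -⟩, h⟩; exact ⟨hs, h⟩
  have heq : s.filter (fun i => u i = v i) =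
      (s.filter fun i => ¬ u i < v i).filter fun i => ¬ v i < u i := by
    ext i; simp only [mem_filter, not_lt]; constructor
    · rintro ⟨hs, h⟩; exact ⟨⟨hs, h.ge⟩, h.le⟩
    · rintro ⟨⟨hs, h₁⟩, h₂⟩; exact ⟨hs, le_antisymm h₂ h₁⟩
  rw [hgt, heq, add_assoc, sum_filter_add_sum_filter_not, sum_filter_add_sum_filter_not]

def quads (N : ℕ) : Finset (ℕ × ℕ × ℕ × ℕ) :=
  (Icc 1 N ×ˢ Icc 1 N ×ˢ Icc 1 N ×ˢ Icc 1 N).filter fun p => p.1 * p.2.2.1 + p.2.1 * p.2.2.2 = N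

theorem mem_quads {N a b x y : ℕ} :
    (a, b, x, y) ∈ quads N ↔ a * x + b * y = N ∧ 0 < a ∧ 0 < b ∧ 0 < x ∧ 0 < y := by
  simp only [quads, mem_filter, mem_product, mem_Icc]
  constructor
  · rintro ⟨⟨⟨ha, -⟩, ⟨hb, -⟩, ⟨hx, -⟩, ⟨hy, -⟩⟩, h⟩
    exact ⟨h, ha, hb, hx, hy⟩
  · rintro ⟨h, ha, hb, hx, hy⟩
    refine ⟨⟨⟨ha, ?_⟩, ⟨hb, ?_⟩, ⟨hx, ?_⟩, ⟨hy, ?_⟩⟩, h⟩ <;> nlinarith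

def quadSwap : ℕ × ℕ × ℕ × ℕ ≃ ℕ × ℕ × ℕ × ℕ where
  toFun p := (p.2.1, p.1, p.2.2.2, p.2.2.1)
  invFun p := (p.2.1, p.1, p.2.2.2, p.2.2.1)
  left_inv _ := rfl
  right_inv _ := rfl

section
variable {M : Type*} [AddCommMonoid M] {N : ℕ}

theorem sum_quads_filter_swap (P : ℕ × ℕ × ℕ × ℕ → Prop) [DecidablePred P]
    (f : ℕ × ℕ × ℕ × ℕ → M) :
    ∑ p ∈ quads N with P p, f p = ∑ p ∈ quads N with P (quadSwap p), f (quadSwap p) := by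
  refine (sum_equiv quadSwap (fun ⟨a, b, x, y⟩ => ?_) fun _ _ => rfl).symm
  rw [mem_filter, mem_filter]
  simp only [quadSwap, Equiv.coe_fn_mk, mem_quads]
  constructor <;> rintro ⟨⟨h, ha, hb, hx, hy⟩, hP⟩ <;>
    exact ⟨⟨(add_comm _ _).trans h, hb, ha, hy, hx⟩, hP⟩

theorem sum_quads_filter_cofactor_lt (g : ℕ → ℕ → M) :
    ∑ p ∈ quads N with p.2.2.2 < p.2.2.1, g p.1 p.2.1 =
      ∑ p ∈ quads N with p.1 < p.2.1, g p.1 (p.2.1 - p.1) := by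
  refine sum_nbij' (fun p => (p.1, p.1 + p.2.1, p.2.2.1 - p.2.2.2, p.2.2.2))
    (fun p => (p.1, p.2.1 - p.1, p.2.2.1 + p.2.2.2, p.2.2.2)) ?_ ?_ ?_ ?_ ?_
  · rintro ⟨a, b, x, y⟩ hp
    simp only [mem_filter, mem_quads] at hp ⊢
    obtain ⟨⟨h, ha, hb, hx, hy⟩, hyx⟩ := hp
    refine ⟨⟨?_, ha, by omega, by omega, hy⟩, by omega⟩
    zify [hyx.le] at h ⊢
    linear_combination h
  · rintro ⟨a, b, x, y⟩ hp
    simp only [mem_filter, mem_quads] at hp ⊢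
    obtain ⟨⟨h, ha, hb, hx, hy⟩, hab⟩ := hp
    refine ⟨⟨?_, ha, by omega, by omega, hy⟩, by omega⟩
    zify [hab.le] at h ⊢
    linear_combination h
  · rintro ⟨a, b, x, y⟩ hp
    have hyx : y < x := (mem_filter.1 hp).2
    simp only [Prod.mk.injEq, true_and, and_true]
    omega
  · rintro ⟨a, b, x, y⟩ hp
    have hab : a < b := (mem_filter.1 hp).2
    simp only [Prod.mk.injEq, true_and, and_true]
    omega
  · rintro ⟨a, b, x, y⟩ -
    simp

theorem sum_quads_filter_divisor_eq (g : ℕ → M) :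
    ∑ p ∈ quads N with p.1 = p.2.1, g p.1 = ∑ q ∈ N.divisorsAntidiagonal, (q.2 - 1) • g q.1 := by
  simp only [← Nat.card_Ico 1, ← sum_const]
  rw [sum_sigma']
  refine sum_nbij' (fun p => ⟨(p.1, p.2.2.1 + p.2.2.2), p.2.2.1⟩)
    (fun q => (q.1.1, q.1.1, q.2, q.1.2 - q.2)) ?_ ?_ ?_ ?_ ?_
  · rintro ⟨a, b, x, y⟩ hp
    simp only [mem_filter, mem_quads] at hp
    obtain ⟨⟨h, ha, -, hx, hy⟩, rfl⟩ := hp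
    have := Nat.mul_pos ha hx
    simp only [mem_sigma, Nat.mem_divisorsAntidiagonal, mem_Ico]
    exact ⟨⟨by rw [← h, mul_add], by omega⟩, hx, by omega⟩
  · rintro ⟨⟨d, e⟩, x⟩ hq
    simp only [mem_sigma, Nat.mem_divisorsAntidiagonal, mem_Ico] at hq
    obtain ⟨⟨h, hN⟩, hx, hxe⟩ := hq
    have hd : 0 < d := Nat.pos_of_ne_zero (left_ne_zero_of_mul (h ▸ hN))
    simp only [mem_filter, mem_quads, and_true]
    exact ⟨by rw [← mul_add, Nat.add_sub_cancel' hxe.le, h], hd, hd, hx, by omega⟩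
  · rintro ⟨a, b, x, y⟩ hp
    obtain ⟨-, hab⟩ := mem_filter.1 hp
    dsimp only at hab ⊢
    rw [hab, Nat.add_sub_cancel_left]
  · rintro ⟨⟨d, e⟩, x⟩ hq
    simp only [mem_sigma, mem_Ico] at hq
    simp only [Nat.add_sub_cancel' hq.2.2.le]
  · intros; rfl

theorem sum_quads_filter_cofactor_eq (g : ℕ → ℕ → M) :
    ∑ p ∈ quads N with p.2.2.1 = p.2.2.2, g p.1 p.2.1 =
      ∑ q ∈ N.divisorsAntidiagonal, ∑ a ∈ Ico 1 q.1, g a (q.1 - a) := by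
  rw [sum_sigma']
  refine sum_nbij' (fun p => ⟨(p.1 + p.2.1, p.2.2.1), p.1⟩)
    (fun q => (q.2, q.1.1 - q.2, q.1.2, q.1.2)) ?_ ?_ ?_ ?_ ?_
  · rintro ⟨a, b, x, y⟩ hp
    simp only [mem_filter, mem_quads] at hp
    obtain ⟨⟨h, ha, hb, hx, -⟩, rfl⟩ := hp
    have := Nat.mul_pos ha hx
    simp only [mem_sigma, Nat.mem_divisorsAntidiagonal, mem_Ico]
    exact ⟨⟨by rw [← h, add_mul], by omega⟩, ha, by omega⟩
  · rintro ⟨⟨e, x⟩, a⟩ hq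
    simp only [mem_sigma, Nat.mem_divisorsAntidiagonal, mem_Ico] at hq
    obtain ⟨⟨h, hN⟩, ha, hae⟩ := hq
    have hx : 0 < x := Nat.pos_of_ne_zero (right_ne_zero_of_mul (h ▸ hN))
    simp only [mem_filter, mem_quads, and_true]
    exact ⟨by rw [← add_mul, Nat.add_sub_cancel' hae.le, h], ha, by omega, hx, hx⟩
  · rintro ⟨a, b, x, y⟩ hp
    obtain ⟨-, hxy⟩ := mem_filter.1 hp
    dsimp only at hxy ⊢
    rw [hxy, Nat.add_sub_cancel_left]
  · rintro ⟨⟨e, x⟩, a⟩ hq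
    simp only [mem_sigma, mem_Ico] at hq
    simp only [Nat.add_sub_cancel' hq.2.2.le]
  · rintro ⟨a, b, x, y⟩ -
    simp

theorem sum_quads_split_by_divisors (f : ℕ → ℕ → M) :
    ∑ p ∈ quads N, f p.1 p.2.1 = ∑ p ∈ quads N with p.1 < p.2.1, (f p.1 p.2.1 + f p.2.1 p.1) +
      ∑ q ∈ N.divisorsAntidiagonal, (q.2 - 1) • f q.1 q.1 := by
  rw [← sum_filter_lt_add_sum_filter_gt_add_sum_filter_eq (quads N) (·.1) (·.2.1),
    sum_quads_filter_swap fun p => p.2.1 < p.1, sum_add_distrib,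
    ← sum_quads_filter_divisor_eq fun a => f a a]
  congr 1
  exact sum_congr rfl fun p hp => by rw [(mem_filter.1 hp).2]

theorem sum_quads_split_by_cofactors (f : ℕ → ℕ → M) :
    ∑ p ∈ quads N, f p.1 p.2.1 =
      ∑ p ∈ quads N with p.1 < p.2.1, (f p.1 (p.2.1 - p.1) + f (p.2.1 - p.1) p.1) +
        ∑ q ∈ N.divisorsAntidiagonal, ∑ a ∈ Ico 1 q.1, f a (q.1 - a) := by
  rw [← sum_filter_lt_add_sum_filter_gt_add_sum_filter_eq (quads N) (·.2.2.1) (·.2.2.2),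
    sum_quads_filter_swap fun p => p.2.2.1 < p.2.2.2, sum_quads_filter_cofactor_eq,
    sum_add_distrib, add_comm (∑ p ∈ _ with _, f _ _)]
  exact congrArg₂ (· + ·) (congrArg₂ (· + ·) (sum_quads_filter_cofactor_lt f)
    (sum_quads_filter_cofactor_lt fun a b => f b a)) rfl

end

theorem sum_quads_sub_eq_sum_divisorsAntidiagonal (F H : ℚ → ℚ → ℚ)
    (hFH : ∀ a c : ℕ, 0 < a → 0 < c → F a (a + c) + F (a + c) a = H a c + H c a) (N : ℕ) :
    ∑ p ∈ quads N, (F p.1 p.2.1 - H p.1 p.2.1) =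
      ∑ q ∈ N.divisorsAntidiagonal,
        ((q.2 - 1 : ℚ) * F q.1 q.1 - ∑ a ∈ Ico 1 q.1, H a (q.1 - a)) := by
  have hF := sum_quads_split_by_divisors (N := N) fun a b => F a b
  have hH := sum_quads_split_by_cofactors (N := N) fun a b => H a b
  have hlt : ∑ p ∈ quads N with p.1 < p.2.1, (F p.1 p.2.1 + F p.2.1 p.1) =
      ∑ p ∈ quads N with p.1 < p.2.1, (H p.1 ↑(p.2.1 - p.1) + H ↑(p.2.1 - p.1) p.1) := by
    refine sum_congr rfl fun ⟨a, b, x, y⟩ hp => ?_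
    obtain ⟨hp, hab : a < b⟩ := mem_filter.1 hp
    obtain ⟨c, rfl⟩ : ∃ c, b = a + c := ⟨b - a, by omega⟩
    dsimp only
    rw [Nat.add_sub_cancel_left]
    push_cast
    exact hFH a c (mem_quads.1 hp).2.1 (by omega)
  rw [sum_sub_distrib, hF, hH, hlt, add_sub_add_left_eq_sub, ← sum_sub_distrib]
  refine sum_congr rfl fun q hq => ?_
  obtain ⟨hq, hN⟩ := Nat.mem_divisorsAntidiagonal.1 hq
  have h₂ : 1 ≤ q.2 := Nat.one_le_iff_ne_zero.2 (right_ne_zero_of_mul (hq ▸ hN))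
  rw [nsmul_eq_mul, Nat.cast_sub h₂, Nat.cast_one]
  congr 1
  exact sum_congr rfl fun a ha => by rw [Nat.cast_sub (mem_Ico.1 ha).2.le]

theorem sum_divisorsAntidiagonal_fst_pow (k N : ℕ) :
    ∑ q ∈ N.divisorsAntidiagonal, (q.1 : ℚ) ^ k = sigma' k N := by
  rw [Nat.sum_divisorsAntidiagonal fun a _ => (a : ℚ) ^ k, sigma']
  push_cast
  rfl

theorem sum_antidiagonal_sum_divisors_mul_sum_divisors {R : Type*} [NonUnitalNonAssocSemiring R]
    (g h : ℕ → R) (N : ℕ) :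
    ∑ ij ∈ antidiagonal N, (∑ d ∈ ij.1.divisors, g d) * ∑ d ∈ ij.2.divisors, h d =
      ∑ p ∈ quads N, g p.1 * h p.2.1 := by
  have hdiv (f : ℕ → R) (n : ℕ) : ∑ d ∈ n.divisors, f d = ∑ q ∈ n.divisorsAntidiagonal, f q.1 :=
    (Nat.sum_divisorsAntidiagonal fun a _ => f a).symm
  simp only [hdiv, sum_mul_sum, ← sum_product']
  rw [sum_sigma']
  refine sum_nbij' (fun s => (s.2.1.1, s.2.2.1, s.2.1.2, s.2.2.2))
    (fun p => ⟨(p.1 * p.2.2.1, p.2.1 * p.2.2.2), ((p.1, p.2.2.1), (p.2.1, p.2.2.2))⟩) ?_ ?_ ?_ ?_ ?_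
  · rintro ⟨⟨i, j⟩, ⟨a, x⟩, ⟨b, y⟩⟩ hs
    simp only [mem_sigma, mem_product, HasAntidiagonal.mem_antidiagonal,
      Nat.mem_divisorsAntidiagonal] at hs
    obtain ⟨hij, ⟨rfl, hi⟩, ⟨rfl, hj⟩⟩ := hs
    simp only [mem_quads]
    refine ⟨hij, ?_, ?_, ?_, ?_⟩ <;> apply Nat.pos_of_ne_zero <;> rintro rfl <;> simp_all
  · rintro ⟨a, b, x, y⟩ hp
    obtain ⟨h, ha, hb, hx, hy⟩ := mem_quads.1 hp
    simp only [mem_sigma, mem_product, HasAntidiagonal.mem_antidiagonal,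
      Nat.mem_divisorsAntidiagonal]
    exact ⟨h, ⟨trivial, (Nat.mul_pos ha hx).ne'⟩, trivial, (Nat.mul_pos hb hy).ne'⟩
  · rintro ⟨⟨i, j⟩, ⟨a, x⟩, ⟨b, y⟩⟩ hs
    simp only [mem_sigma, mem_product, Nat.mem_divisorsAntidiagonal] at hs
    obtain ⟨-, ⟨rfl, -⟩, ⟨rfl, -⟩⟩ := hs
    rfl
  · intros; rfl
  · intros; rfl

theorem sum_Ico_eq_of_eq_cubic {g : ℕ → ℚ} {e : ℕ} (he : 0 < e) (c₀ c₁ c₂ c₃ : ℚ)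
    (hg : ∀ a : ℕ, g a =
      c₀ + c₁ * (a * (e - a)) + c₂ * (a * (e - a)) ^ 2 + c₃ * (a * (e - a)) ^ 3) :
    ∑ a ∈ Ico 1 e, g a =
      c₀ * (e - 1) + c₁ * (e ^ 3 - e) / 6 + c₂ * (e ^ 5 - e) / 30 +
        c₃ * (3 * e ^ 7 + 7 * e ^ 3 - 10 * e) / 420 := by
  -- a discrete antiderivative of `g`, from Faulhaber's formulas
  let P : ℚ → ℚ := fun a => c₀ * a
    + c₁ * (e * (a ^ 2 - a) / 2 - a / 6 + a ^ 2 / 2 - a ^ 3 / 3)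
    + c₂ * (e ^ 2 * (a / 6 - a ^ 2 / 2 + a ^ 3 / 3) + e * (-a ^ 2 / 2 + a ^ 3 - a ^ 4 / 2)
      - a / 30 + a ^ 3 / 3 - a ^ 4 / 2 + a ^ 5 / 5)
    + c₃ * (e ^ 3 * (a ^ 2 / 4 - a ^ 3 / 2 + a ^ 4 / 4)
      + e ^ 2 * (a / 10 - a ^ 3 + 3 * a ^ 4 / 2 - 3 * a ^ 5 / 5)
      + e * (-a ^ 2 / 4 + 5 * a ^ 4 / 4 - 3 * a ^ 5 / 2 + a ^ 6 / 2)
      - a / 42 + a ^ 3 / 6 - a ^ 5 / 2 + a ^ 6 / 2 - a ^ 7 / 7)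
  have hP (a : ℕ) : P (a + 1 : ℕ) - P a = g a := by
    simp only [P, hg]
    push_cast
    ring
  rw [← sum_congr rfl fun a _ => hP a, sum_Ico_sub (fun a : ℕ => P a) he]
  simp only [P]
  push_cast
  ring

theorem sum_antidiagonal_sigma'_mul_sigma' (u v N : ℕ) :
    ∑ ij ∈ antidiagonal N, (sigma' u ij.1 : ℚ) * sigma' v ij.2 =
      ∑ p ∈ quads N, (p.1 : ℚ) ^ u * (p.2.1 : ℚ) ^ v := by
  simp only [sigma', Nat.cast_sum, Nat.cast_pow]
  exact sum_antidiagonal_sum_divisors_mul_sum_divisors _ _ N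

theorem sum_antidiagonal_sigma'_mul_sigma'_comm (u v N : ℕ) :
    ∑ ij ∈ antidiagonal N, (sigma' u ij.1 : ℚ) * sigma' v ij.2 =
      ∑ ij ∈ antidiagonal N, (sigma' v ij.1 : ℚ) * sigma' u ij.2 := by
  rw [← Nat.sum_antidiagonal_swap]
  simp only [Prod.fst_swap, Prod.snd_swap, mul_comm]

theorem fst_pos_and_cast_mul_of_mem_divisorsAntidiagonal {N : ℕ} {q : ℕ × ℕ}
    (hq : q ∈ N.divisorsAntidiagonal) : 0 < q.1 ∧ (q.1 : ℚ) * q.2 = N :=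
  ⟨Nat.pos_of_mem_divisors (Nat.fst_mem_divisors_of_mem_antidiagonal hq),
    by exact_mod_cast (Nat.mem_divisorsAntidiagonal.1 hq).1⟩

theorem sigma_one_conv_sigma_one (N : ℕ) :
    12 * ∑ ij ∈ antidiagonal N, (sigma' 1 ij.1 : ℚ) * sigma' 1 ij.2 =
      5 * sigma' 3 N + sigma' 1 N - 6 * N * sigma' 1 N := by
  have key : ∑ p ∈ quads N, -2 * ((p.1 : ℚ) ^ 1 * p.2.1 ^ 1) = _ :=
    (sum_congr rfl fun p _ => by ring).trans <| sum_quads_sub_eq_sum_divisorsAntidiagonal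
      (fun a b => a ^ 2 - a * b + b ^ 2) (fun a c => a ^ 2 + a * c + c ^ 2)
      (fun _ _ _ _ => by ring) N
  rw [← mul_sum, ← sum_antidiagonal_sigma'_mul_sigma'] at key
  calc _ = -6 * (-2 * ∑ ij ∈ antidiagonal N, (sigma' 1 ij.1 : ℚ) * sigma' 1 ij.2) := by ring
    _ = ∑ q ∈ N.divisorsAntidiagonal, (5 * (q.1 : ℚ) ^ 3 + q.1 ^ 1 - 6 * N * q.1 ^ 1) := by
        rw [key, mul_sum]
        refine sum_congr rfl fun q hq => ?_
        obtain ⟨h1, hN⟩ := fst_pos_and_cast_mul_of_mem_divisorsAntidiagonal hq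
        rw [sum_Ico_eq_of_eq_cubic h1 (q.1 ^ 2) (-1) 0 0 fun a => by ring]
        linear_combination (-6) * (q.1 : ℚ) * hN
    _ = _ := by
        simp only [sum_add_distrib, sum_sub_distrib, ← mul_sum, sum_divisorsAntidiagonal_fst_pow]

theorem sigma_one_conv_sigma_three (N : ℕ) :
    240 * ∑ ij ∈ antidiagonal N, (sigma' 1 ij.1 : ℚ) * sigma' 3 ij.2 =
      21 * sigma' 5 N + 10 * sigma' 3 N - 30 * N * sigma' 3 N - sigma' 1 N := by
  have key : ∑ p ∈ quads N, -4 * ((p.1 : ℚ) ^ 1 * p.2.1 ^ 3 + p.1 ^ 3 * p.2.1 ^ 1) = _ :=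
    (sum_congr rfl fun p _ => by ring).trans <| sum_quads_sub_eq_sum_divisorsAntidiagonal
      (fun a b => (a ^ 2 - a * b + b ^ 2) ^ 2) (fun a c => (a ^ 2 + a * c + c ^ 2) ^ 2)
      (fun _ _ _ _ => by ring) N
  rw [← mul_sum, sum_add_distrib, ← sum_antidiagonal_sigma'_mul_sigma',
    ← sum_antidiagonal_sigma'_mul_sigma', ← sum_antidiagonal_sigma'_mul_sigma'_comm 1 3] at key
  calc _ = -30 * (-4 * (∑ ij ∈ antidiagonal N, (sigma' 1 ij.1 : ℚ) * sigma' 3 ij.2 +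
        ∑ ij ∈ antidiagonal N, (sigma' 1 ij.1 : ℚ) * sigma' 3 ij.2)) := by ring
    _ = ∑ q ∈ N.divisorsAntidiagonal,
        (21 * (q.1 : ℚ) ^ 5 + 10 * q.1 ^ 3 - 30 * N * q.1 ^ 3 - q.1 ^ 1) := by
        rw [key, mul_sum]
        refine sum_congr rfl fun q hq => ?_
        obtain ⟨h1, hN⟩ := fst_pos_and_cast_mul_of_mem_divisorsAntidiagonal hq
        rw [sum_Ico_eq_of_eq_cubic h1 (q.1 ^ 4) (-2 * q.1 ^ 2) 1 0 fun a => by ring]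
        linear_combination (-30) * (q.1 : ℚ) ^ 3 * hN
    _ = _ := by
        simp only [sum_add_distrib, sum_sub_distrib, ← mul_sum, sum_divisorsAntidiagonal_fst_pow]

theorem sigma_three_conv_sigma_three (N : ℕ) :
    120 * ∑ ij ∈ antidiagonal N, (sigma' 3 ij.1 : ℚ) * sigma' 3 ij.2 =
      sigma' 7 N - sigma' 3 N := by
  have key : ∑ p ∈ quads N, -4 * ((p.1 : ℚ) ^ 3 * p.2.1 ^ 3) = _ :=
    (sum_congr rfl fun p _ => by ring).trans <| sum_quads_sub_eq_sum_divisorsAntidiagonal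
      (fun a b => (a * b * (a - b)) ^ 2) (fun a c => (a * c * (a + c)) ^ 2)
      (fun _ _ _ _ => by ring) N
  rw [← mul_sum, ← sum_antidiagonal_sigma'_mul_sigma'] at key
  calc _ = -30 * (-4 * ∑ ij ∈ antidiagonal N, (sigma' 3 ij.1 : ℚ) * sigma' 3 ij.2) := by ring
    _ = ∑ q ∈ N.divisorsAntidiagonal, ((q.1 : ℚ) ^ 7 - q.1 ^ 3) := by
        rw [key, mul_sum]
        refine sum_congr rfl fun q hq => ?_
        obtain ⟨h1, -⟩ := fst_pos_and_cast_mul_of_mem_divisorsAntidiagonal hq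
        rw [sum_Ico_eq_of_eq_cubic h1 0 0 (q.1 ^ 2) 0 fun a => by ring]
        ring
    _ = _ := by simp only [sum_sub_distrib, sum_divisorsAntidiagonal_fst_pow]

theorem sigma_one_conv_sigma_five (N : ℕ) :
    504 * ∑ ij ∈ antidiagonal N, (sigma' 1 ij.1 : ℚ) * sigma' 5 ij.2 =
      20 * sigma' 7 N + 21 * sigma' 5 N - 42 * N * sigma' 5 N + sigma' 1 N := by
  have key : ∑ p ∈ quads N, -12 * ((p.1 : ℚ) ^ 1 * p.2.1 ^ 5 + p.1 ^ 5 * p.2.1 ^ 1) = _ :=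
    (sum_congr rfl fun p _ => by ring).trans <| sum_quads_sub_eq_sum_divisorsAntidiagonal
      (fun a b => 2 * (a ^ 2 - a * b + b ^ 2) ^ 3 - 7 * (a * b * (a - b)) ^ 2)
      (fun a c => 2 * (a ^ 2 + a * c + c ^ 2) ^ 3 - 7 * (a * c * (a + c)) ^ 2)
      (fun _ _ _ _ => by ring) N
  rw [← mul_sum, sum_add_distrib, ← sum_antidiagonal_sigma'_mul_sigma',
    ← sum_antidiagonal_sigma'_mul_sigma', ← sum_antidiagonal_sigma'_mul_sigma'_comm 1 5] at key
  calc _ = -21 * (-12 * (∑ ij ∈ antidiagonal N, (sigma' 1 ij.1 : ℚ) * sigma' 5 ij.2 +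
        ∑ ij ∈ antidiagonal N, (sigma' 1 ij.1 : ℚ) * sigma' 5 ij.2)) := by ring
    _ = ∑ q ∈ N.divisorsAntidiagonal,
        (20 * (q.1 : ℚ) ^ 7 + 21 * q.1 ^ 5 - 42 * N * q.1 ^ 5 + q.1 ^ 1) := by
        rw [key, mul_sum]
        refine sum_congr rfl fun q hq => ?_
        obtain ⟨h1, hN⟩ := fst_pos_and_cast_mul_of_mem_divisorsAntidiagonal hq
        rw [sum_Ico_eq_of_eq_cubic h1 (2 * q.1 ^ 6) (-6 * q.1 ^ 4) (-q.1 ^ 2) (-2)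
          fun a => by ring]
        linear_combination (-42) * (q.1 : ℚ) ^ 5 * hN
    _ = _ := by
        simp only [sum_add_distrib, sum_sub_distrib, ← mul_sum, sum_divisorsAntidiagonal_fst_pow]

open PowerSeries

noncomputable def sigmaSeries (k : ℕ) : PowerSeries ℚ :=
  mk fun n => (sigma' k n : ℚ)

theorem eq_one_add_C_mul_sigmaSeries {E : PowerSeries ℚ} {c : ℚ} {k : ℕ}
    (hE : E = mk fun n => if n = 0 then 1 else c * (sigma' k n : ℚ)) :
    E = 1 + C c * sigmaSeries k := by
  ext n
  rcases n with _ | n <;> simp [hE, sigmaSeries, coeff_one, sigma']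

theorem coeff_Dq_one_add_C_mul_sigmaSeries (c : ℚ) (k n : ℕ) :
    coeff n (Dq (1 + C c * sigmaSeries k)) = c * (n * sigma' k n) := by
  rcases n with _ | n <;> simp [Dq, sigmaSeries, coeff_one]
  ring

theorem coeff_one_add_C_mul_sigmaSeries (c : ℚ) (k n : ℕ) :
    coeff n (1 + C c * sigmaSeries k) = coeff n 1 + c * sigma' k n := by
  simp [sigmaSeries]

theorem coeff_one_add_C_mul_sigmaSeries_mul (c c' : ℚ) (u v n : ℕ) :
    coeff n ((1 + C c * sigmaSeries u) * (1 + C c' * sigmaSeries v)) =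
      coeff n 1 + c * sigma' u n + c' * sigma' v n +
        c * c' * ∑ ij ∈ antidiagonal n, (sigma' u ij.1 : ℚ) * sigma' v ij.2 := by
  rw [show (1 + C c * sigmaSeries u) * (1 + C c' * sigmaSeries v) = 1 + C c * sigmaSeries u +
      C c' * sigmaSeries v + C (c * c') * (sigmaSeries u * sigmaSeries v) by rw [map_mul]; ring,
    map_add, map_add, map_add, coeff_C_mul, coeff_C_mul, coeff_C_mul, coeff_mul]
  simp only [sigmaSeries, coeff_mk]

/-- Ramanujan's identities: `D(E₂) = (E₂² − E₄)/12`, `D(E₄) = (E₂E₄ − E₆)/3`,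
`D(E₆) = (E₂E₆ − E₄²)/2`. -/
theorem statement11 :
    Dq E₂ = (1 / 12 : ℚ) • (E₂ ^ 2 - E₄) ∧
    Dq E₄ = (1 / 3 : ℚ) • (E₂ * E₄ - E₆) ∧
    Dq E₆ = (1 / 2 : ℚ) • (E₂ * E₆ - E₄ ^ 2) := by
  rw [eq_one_add_C_mul_sigmaSeries (E := E₂) rfl, eq_one_add_C_mul_sigmaSeries (E := E₄) rfl,
    eq_one_add_C_mul_sigmaSeries (E := E₆) rfl]
  refine ⟨ext fun N => ?_, ext fun N => ?_, ext fun N => ?_⟩ <;>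
    simp only [pow_two, coeff_Dq_one_add_C_mul_sigmaSeries, coeff_smul, map_sub, smul_eq_mul,
      coeff_one_add_C_mul_sigmaSeries_mul, coeff_one_add_C_mul_sigmaSeries]
  · linear_combination (-4) * sigma_one_conv_sigma_one N
  · linear_combination 8 * sigma_one_conv_sigma_three N
  · linear_combination (-12) * sigma_one_conv_sigma_five N + 240 * sigma_three_conv_sigma_three N
end
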